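/- Let f : [0,1] → [0,1] and suppose there exist pairwise disjoint open intervals (a_i, b_i), i ∈ I, with I countable, such that: (i) for each i ∈ I, f is continuous and monotone on (a_i, b_i) with f((a_i, b_i)) = (0,1); (ii) |f(x) − f(y)| > |x − y| for all distinct x, y ∈ (a_i, b_i), for each i ∈ I; (iii) the set Λ = [0,1] ∖ ⋃_{i∈I} (a_i, b_i) is countable and f(Λ) = {0}. Define the linearised map g : [0,1] → [0,1] by: g is linear on each (a_i, b_i) with lim_{x→a_i⁺} g(x) = lim_{x→a_i⁺} f(x) and lim_{x→b_i⁻} g(x) = lim_{x→b_i⁻} f(x), and g(x) = 0 for x ∈ Λ. Then f and g are topologically conjugate, i.e., there exists a homeomorphism h : [0,1] → [0,1] such that g = h^{−1} ∘ f ∘ h. -/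

import Mathlib

open Set Filter Topology

namespace BaldwinConj

variable {I : Type}

/-- The complement set Λ. -/
def Lam (a b : I → ℝ) : Set ℝ := Icc 0 1 \ ⋃ i, Ioo (a i) (b i)

structure Sys (a b : I → ℝ) (ori : I → Prop) (F : ℝ → ℝ) : Prop where
  maps : MapsTo F (Icc 0 1) (Icc 0 1)
  sub : ∀ i, Ioo (a i) (b i) ⊆ Icc 0 1
  disj : Pairwise fun i j => Disjoint (Ioo (a i) (b i)) (Ioo (a j) (b j))
  cont : ∀ i, ContinuousOn F (Ioo (a i) (b i))
  mono : ∀ i, ori i → StrictMonoOn F (Ioo (a i) (b i))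
  anti : ∀ i, ¬ ori i → StrictAntiOn F (Ioo (a i) (b i))
  img : ∀ i, F '' Ioo (a i) (b i) = Ioo 0 1
  expa : ∀ i, ∀ x ∈ Ioo (a i) (b i), ∀ y ∈ Ioo (a i) (b i), x ≠ y → |x - y| < |F x - F y|
  lam : ∀ x ∈ Lam a b, F x = 0

variable {a b : I → ℝ} {ori : I → Prop} {F G : ℝ → ℝ}

namespace Sys

lemma ab_lt (S : Sys a b ori F) (i : I) : a i < b i := by
  by_contra h
  have : Ioo (a i) (b i) = ∅ := Ioo_eq_empty h
  have h2 := S.img i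
  rw [this, image_empty] at h2
  exact absurd h2.symm (Nonempty.ne_empty (nonempty_Ioo.2 one_pos))

lemma a_nonneg (S : Sys a b ori F) (i : I) : 0 ≤ a i := by
  by_contra h
  push_neg at h
  have hm : min 0 (b i) > a i := lt_min h (S.ab_lt i)
  set t := (a i + min 0 (b i)) / 2 with ht
  have h1 : t ∈ Ioo (a i) (b i) := by
    constructor
    · simp only [ht]; linarith
    · have : min 0 (b i) ≤ b i := min_le_right _ _
      simp only [ht]; linarith
  have h2 := (S.sub i h1).1
  have : t < 0 := by
    have : min 0 (b i) ≤ 0 := min_le_left _ _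
    simp only [ht]; linarith
  linarith

lemma b_le_one (S : Sys a b ori F) (i : I) : b i ≤ 1 := by
  by_contra h
  push_neg at h
  have hm : max 1 (a i) < b i := max_lt h (S.ab_lt i)
  set t := (max 1 (a i) + b i) / 2 with ht
  have h1 : t ∈ Ioo (a i) (b i) := by
    constructor
    · have : a i ≤ max 1 (a i) := le_max_right _ _
      simp only [ht]; linarith
    · simp only [ht]; linarith
  have h2 := (S.sub i h1).2
  have : 1 < t := by
    have : 1 ≤ max 1 (a i) := le_max_left _ _
    simp only [ht]; linarith
  linarith

lemma subIoo (S : Sys a b ori F) (i : I) : Ioo (a i) (b i) ⊆ Ioo (0:ℝ) 1 := fun t ht =>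
  ⟨lt_of_le_of_lt (S.a_nonneg i) ht.1, lt_of_lt_of_le ht.2 (S.b_le_one i)⟩

lemma zero_lam (S : Sys a b ori F) : (0:ℝ) ∈ Lam a b := by
  refine ⟨⟨le_refl _, zero_le_one⟩, ?_⟩
  intro h
  rcases mem_iUnion.1 h with ⟨i, hi⟩
  exact absurd (S.subIoo i hi).1 (lt_irrefl 0)

lemma lam_not_Ioo (S : Sys a b ori F) {x : ℝ} (hx : x ∈ Lam a b) (i : I) :
    x ∉ Ioo (a i) (b i) := fun h => hx.2 (mem_iUnion.2 ⟨i, h⟩)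

lemma mem_cases (S : Sys a b ori F) {x : ℝ} (hx : x ∈ Icc (0:ℝ) 1) :
    x ∈ Lam a b ∨ ∃ i, x ∈ Ioo (a i) (b i) := by
  by_cases h : x ∈ ⋃ i, Ioo (a i) (b i)
  · exact Or.inr (mem_iUnion.1 h)
  · exact Or.inl ⟨hx, h⟩

lemma Ioo_unique (S : Sys a b ori F) {x : ℝ} {i j : I} (hi : x ∈ Ioo (a i) (b i))
    (hj : x ∈ Ioo (a j) (b j)) : i = j := by
  by_contra h
  exact Set.disjoint_left.1 (S.disj h) hi hj

lemma F_Ioo_mem (S : Sys a b ori F) {i : I} {x : ℝ} (hx : x ∈ Ioo (a i) (b i)) :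
    F x ∈ Ioo (0:ℝ) 1 := (S.img i) ▸ mem_image_of_mem F hx

lemma surjIoo (S : Sys a b ori F) (i : I) {y : ℝ} (hy : y ∈ Ioo (0:ℝ) 1) :
    ∃ x ∈ Ioo (a i) (b i), F x = y := by
  have := (S.img i).symm ▸ hy
  rcases this with ⟨x, hx, hxy⟩
  exact ⟨x, hx, hxy⟩

lemma iter_mem (S : Sys a b ori F) {x : ℝ} (hx : x ∈ Icc (0:ℝ) 1) (n : ℕ) :
    F^[n] x ∈ Icc (0:ℝ) 1 := by
  induction n with
  | zero => simpa using hx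
  | succ n ih => rw [Function.iterate_succ_apply']; exact S.maps ih

lemma lam_F_zero (S : Sys a b ori F) {x : ℝ} (hx : x ∈ Lam a b) : F x = 0 := S.lam x hx

lemma iter_lam (S : Sys a b ori F) {x : ℝ} (hx : x ∈ Lam a b) (n : ℕ) (hn : 1 ≤ n) :
    F^[n] x = 0 := by
  induction n with
  | zero => omega
  | succ n ih =>
    rw [Function.iterate_succ_apply']
    rcases Nat.eq_or_lt_of_le hn with h | h
    · have : n = 0 := by omega
      subst this; simpa using S.lam x hx
    · have hn' : 1 ≤ n := by omega
      rw [ih hn']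
      exact S.lam 0 S.zero_lam

/-- image of an interior subinterval, monotone case -/
lemma image_Ioo_mono (S : Sys a b ori F) {i : I} (hor : ori i) {u v : ℝ}
    (hu : u ∈ Ioo (a i) (b i)) (hv : v ∈ Ioo (a i) (b i)) (huv : u < v) :
    F '' Ioo u v = Ioo (F u) (F v) := by
  have hm := S.mono i hor
  ext y
  constructor
  · rintro ⟨t, ht, rfl⟩
    have htJ : t ∈ Ioo (a i) (b i) := ⟨lt_trans hu.1 ht.1, lt_trans ht.2 hv.2⟩
    exact ⟨hm hu htJ ht.1, hm htJ hv ht.2⟩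
  · intro hy
    have hy01 : y ∈ Ioo (0:ℝ) 1 :=
      ⟨lt_trans (S.F_Ioo_mem hu).1 hy.1, lt_trans hy.2 (S.F_Ioo_mem hv).2⟩
    rcases S.surjIoo i hy01 with ⟨x, hx, rfl⟩
    refine ⟨x, ⟨?_, ?_⟩, rfl⟩
    · by_contra h; push_neg at h
      rcases lt_or_eq_of_le h with h' | h'
      · exact absurd (hm hx hu h').le (not_le.2 hy.1)
      · subst h'; exact absurd hy.1 (lt_irrefl _)
    · by_contra h; push_neg at h
      rcases lt_or_eq_of_le h with h' | h'
      · exact absurd (hm hv hx h').le (not_le.2 hy.2)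
      · subst h'; exact absurd hy.2 (lt_irrefl _)

lemma image_Ioo_right_mono (S : Sys a b ori F) {i : I} (hor : ori i) {u : ℝ}
    (hu : u ∈ Ioo (a i) (b i)) : F '' Ioo u (b i) = Ioo (F u) 1 := by
  have hm := S.mono i hor
  ext y
  constructor
  · rintro ⟨t, ht, rfl⟩
    have htJ : t ∈ Ioo (a i) (b i) := ⟨lt_trans hu.1 ht.1, ht.2⟩
    exact ⟨hm hu htJ ht.1, (S.F_Ioo_mem htJ).2⟩
  · intro hy
    have hy01 : y ∈ Ioo (0:ℝ) 1 := ⟨lt_trans (S.F_Ioo_mem hu).1 hy.1, hy.2⟩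
    rcases S.surjIoo i hy01 with ⟨x, hx, rfl⟩
    refine ⟨x, ⟨?_, hx.2⟩, rfl⟩
    by_contra h; push_neg at h
    rcases lt_or_eq_of_le h with h' | h'
    · exact absurd (hm hx hu h').le (not_le.2 hy.1)
    · subst h'; exact absurd hy.1 (lt_irrefl _)

lemma image_Ioo_left_mono (S : Sys a b ori F) {i : I} (hor : ori i) {v : ℝ}
    (hv : v ∈ Ioo (a i) (b i)) : F '' Ioo (a i) v = Ioo 0 (F v) := by
  have hm := S.mono i hor
  ext y
  constructor
  · rintro ⟨t, ht, rfl⟩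
    have htJ : t ∈ Ioo (a i) (b i) := ⟨ht.1, lt_trans ht.2 hv.2⟩
    exact ⟨(S.F_Ioo_mem htJ).1, hm htJ hv ht.2⟩
  · intro hy
    have hy01 : y ∈ Ioo (0:ℝ) 1 := ⟨hy.1, lt_trans hy.2 (S.F_Ioo_mem hv).2⟩
    rcases S.surjIoo i hy01 with ⟨x, hx, rfl⟩
    refine ⟨x, ⟨hx.1, ?_⟩, rfl⟩
    by_contra h; push_neg at h
    rcases lt_or_eq_of_le h with h' | h'
    · exact absurd (hm hv hx h').le (not_le.2 hy.2)
    · subst h'; exact absurd hy.2 (lt_irrefl _)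

lemma image_Ioo_anti (S : Sys a b ori F) {i : I} (hor : ¬ ori i) {u v : ℝ}
    (hu : u ∈ Ioo (a i) (b i)) (hv : v ∈ Ioo (a i) (b i)) (huv : u < v) :
    F '' Ioo u v = Ioo (F v) (F u) := by
  have hm := S.anti i hor
  ext y
  constructor
  · rintro ⟨t, ht, rfl⟩
    have htJ : t ∈ Ioo (a i) (b i) := ⟨lt_trans hu.1 ht.1, lt_trans ht.2 hv.2⟩
    exact ⟨hm htJ hv ht.2, hm hu htJ ht.1⟩
  · intro hy
    have hy01 : y ∈ Ioo (0:ℝ) 1 :=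
      ⟨lt_trans (S.F_Ioo_mem hv).1 hy.1, lt_trans hy.2 (S.F_Ioo_mem hu).2⟩
    rcases S.surjIoo i hy01 with ⟨x, hx, rfl⟩
    refine ⟨x, ⟨?_, ?_⟩, rfl⟩
    · by_contra h; push_neg at h
      rcases lt_or_eq_of_le h with h' | h'
      · exact absurd (hm hx hu h').le (not_le.2 hy.2)
      · subst h'; exact absurd hy.2 (lt_irrefl _)
    · by_contra h; push_neg at h
      rcases lt_or_eq_of_le h with h' | h'
      · exact absurd (hm hv hx h').le (not_le.2 hy.1)
      · subst h'; exact absurd hy.1 (lt_irrefl _)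

lemma image_Ioo_right_anti (S : Sys a b ori F) {i : I} (hor : ¬ ori i) {u : ℝ}
    (hu : u ∈ Ioo (a i) (b i)) : F '' Ioo u (b i) = Ioo 0 (F u) := by
  have hm := S.anti i hor
  ext y
  constructor
  · rintro ⟨t, ht, rfl⟩
    have htJ : t ∈ Ioo (a i) (b i) := ⟨lt_trans hu.1 ht.1, ht.2⟩
    exact ⟨(S.F_Ioo_mem htJ).1, hm hu htJ ht.1⟩
  · intro hy
    have hy01 : y ∈ Ioo (0:ℝ) 1 := ⟨hy.1, lt_trans hy.2 (S.F_Ioo_mem hu).2⟩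
    rcases S.surjIoo i hy01 with ⟨x, hx, rfl⟩
    refine ⟨x, ⟨?_, hx.2⟩, rfl⟩
    by_contra h; push_neg at h
    rcases lt_or_eq_of_le h with h' | h'
    · exact absurd (hm hx hu h').le (not_le.2 hy.2)
    · subst h'; exact absurd hy.2 (lt_irrefl _)

lemma image_Ioo_left_anti (S : Sys a b ori F) {i : I} (hor : ¬ ori i) {v : ℝ}
    (hv : v ∈ Ioo (a i) (b i)) : F '' Ioo (a i) v = Ioo (F v) 1 := by
  have hm := S.anti i hor
  ext y
  constructor
  · rintro ⟨t, ht, rfl⟩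
    have htJ : t ∈ Ioo (a i) (b i) := ⟨ht.1, lt_trans ht.2 hv.2⟩
    exact ⟨hm htJ hv ht.2, (S.F_Ioo_mem htJ).2⟩
  · intro hy
    have hy01 : y ∈ Ioo (0:ℝ) 1 := ⟨lt_trans (S.F_Ioo_mem hv).1 hy.1, hy.2⟩
    rcases S.surjIoo i hy01 with ⟨x, hx, rfl⟩
    refine ⟨x, ⟨hx.1, ?_⟩, rfl⟩
    by_contra h; push_neg at h
    rcases lt_or_eq_of_le h with h' | h'
    · exact absurd (hm hv hx h').le (not_le.2 hy.1)
    · subst h'; exact absurd hy.1 (lt_irrefl _)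

/-- sup of the part of the branch interval mapping into a top subinterval, monotone case -/
lemma sSup_pre_mono_hi (S : Sys a b ori F) {i : I} (hor : ori i) {γ : ℝ} (hγ : γ < 1) :
    sSup (Ioo (a i) (b i) ∩ F ⁻¹' Ioo γ 1) = b i := by
  have hm := S.mono i hor
  have key : ∀ w, w < b i → ∃ x ∈ Ioo (a i) (b i) ∩ F ⁻¹' Ioo γ 1, w < x := by
    intro w hw
    set t₀ := max w ((a i + b i)/2) with ht₀
    have h0 : t₀ ∈ Ioo (a i) (b i) := by
      constructor
      · have := S.ab_lt i; have : a i < (a i + b i)/2 := by linarith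
        exact lt_of_lt_of_le this (le_max_right _ _)
      · have := S.ab_lt i
        apply max_lt hw; linarith
    have hF0 := S.F_Ioo_mem h0
    set y := (max γ (F t₀) + 1)/2 with hy
    have hy01 : y ∈ Ioo (0:ℝ) 1 := by
      constructor
      · have : (0:ℝ) < max γ (F t₀) + 1 := by
          have := hF0.1; have := le_max_right γ (F t₀); linarith
        linarith
      · have h1 : max γ (F t₀) < 1 := max_lt hγ hF0.2
        simp only [hy]; linarith
    rcases S.surjIoo i hy01 with ⟨x, hx, hxy⟩
    have hyt : F t₀ < y := by
      have h1 : max γ (F t₀) < 1 := max_lt hγ hF0.2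
      have := le_max_right γ (F t₀); simp only [hy]; linarith
    have hyγ : γ < y := by
      have h1 : max γ (F t₀) < 1 := max_lt hγ hF0.2
      have := le_max_left γ (F t₀); simp only [hy]; linarith
    have hxt : t₀ < x := by
      by_contra h; push_neg at h
      rcases lt_or_eq_of_le h with h' | h'
      · have := hm hx h0 h'; rw [hxy] at this; linarith
      · subst h'; rw [hxy] at hyt; linarith
    refine ⟨x, ⟨hx, by rw [mem_preimage, hxy]; exact ⟨hyγ, hy01.2⟩⟩, ?_⟩
    exact lt_of_le_of_lt (le_max_left _ _) hxt
  have hne : (Ioo (a i) (b i) ∩ F ⁻¹' Ioo γ 1).Nonempty := by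
    rcases key (a i) (S.ab_lt i) with ⟨x, hx, _⟩
    exact ⟨x, hx⟩
  refine csSup_eq_of_forall_le_of_forall_lt_exists_gt hne (fun x hx => hx.1.2.le) key

/-- inf, monotone case, bottom subinterval -/
lemma sInf_pre_mono_lo (S : Sys a b ori F) {i : I} (hor : ori i) {γ : ℝ} (hγ : 0 < γ) :
    sInf (Ioo (a i) (b i) ∩ F ⁻¹' Ioo 0 γ) = a i := by
  have hm := S.mono i hor
  have key : ∀ w, a i < w → ∃ x ∈ Ioo (a i) (b i) ∩ F ⁻¹' Ioo 0 γ, x < w := by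
    intro w hw
    set t₀ := min w ((a i + b i)/2) with ht₀
    have h0 : t₀ ∈ Ioo (a i) (b i) := by
      constructor
      · apply lt_min hw; have := S.ab_lt i; linarith
      · have := S.ab_lt i; have : (a i + b i)/2 < b i := by linarith
        exact lt_of_le_of_lt (min_le_right _ _) this
    have hF0 := S.F_Ioo_mem h0
    set y := (min γ (F t₀))/2 with hy
    have hy01 : y ∈ Ioo (0:ℝ) 1 := by
      constructor
      · have : (0:ℝ) < min γ (F t₀) := lt_min hγ hF0.1
        simp only [hy]; linarith
      · have := min_le_right γ (F t₀); have := hF0.2; simp only [hy]; linarith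
    rcases S.surjIoo i hy01 with ⟨x, hx, hxy⟩
    have hyt : y < F t₀ := by
      have h1 : 0 < min γ (F t₀) := lt_min hγ hF0.1
      have := min_le_right γ (F t₀); simp only [hy]; linarith
    have hyγ : y < γ := by
      have h1 : 0 < min γ (F t₀) := lt_min hγ hF0.1
      have := min_le_left γ (F t₀); simp only [hy]; linarith
    have hxt : x < t₀ := by
      by_contra h; push_neg at h
      rcases lt_or_eq_of_le h with h' | h'
      · have := hm h0 hx h'; rw [hxy] at this; linarith
      · rw [h'] at hyt; rw [hxy] at hyt; linarith
    refine ⟨x, ⟨hx, by rw [mem_preimage, hxy]; exact ⟨hy01.1, hyγ⟩⟩, ?_⟩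
    exact lt_of_lt_of_le hxt (min_le_left _ _)
  have hne : (Ioo (a i) (b i) ∩ F ⁻¹' Ioo 0 γ).Nonempty := by
    rcases key (b i) (S.ab_lt i) with ⟨x, hx, _⟩
    exact ⟨x, hx⟩
  refine csInf_eq_of_forall_ge_of_forall_gt_exists_lt hne (fun x hx => hx.1.1.le) key

/-- sup, antitone case, bottom subinterval -/
lemma sSup_pre_anti_lo (S : Sys a b ori F) {i : I} (hor : ¬ ori i) {γ : ℝ} (hγ : 0 < γ) :
    sSup (Ioo (a i) (b i) ∩ F ⁻¹' Ioo 0 γ) = b i := by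
  have hm := S.anti i hor
  have key : ∀ w, w < b i → ∃ x ∈ Ioo (a i) (b i) ∩ F ⁻¹' Ioo 0 γ, w < x := by
    intro w hw
    set t₀ := max w ((a i + b i)/2) with ht₀
    have h0 : t₀ ∈ Ioo (a i) (b i) := by
      constructor
      · have h := S.ab_lt i; have : a i < (a i + b i)/2 := by linarith
        exact lt_of_lt_of_le this (le_max_right _ _)
      · have := S.ab_lt i; apply max_lt hw; linarith
    have hF0 := S.F_Ioo_mem h0
    set y := (min γ (F t₀))/2 with hy
    have hy01 : y ∈ Ioo (0:ℝ) 1 := by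
      constructor
      · have : (0:ℝ) < min γ (F t₀) := lt_min hγ hF0.1
        simp only [hy]; linarith
      · have := min_le_right γ (F t₀); have := hF0.2; simp only [hy]; linarith
    rcases S.surjIoo i hy01 with ⟨x, hx, hxy⟩
    have hyt : y < F t₀ := by
      have h1 : 0 < min γ (F t₀) := lt_min hγ hF0.1
      have := min_le_right γ (F t₀); simp only [hy]; linarith
    have hyγ : y < γ := by
      have h1 : 0 < min γ (F t₀) := lt_min hγ hF0.1
      have := min_le_left γ (F t₀); simp only [hy]; linarith
    have hxt : t₀ < x := by
      by_contra h; push_neg at h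
      rcases lt_or_eq_of_le h with h' | h'
      · have := hm hx h0 h'; rw [hxy] at this; linarith
      · rw [h'] at hxy; rw [hxy] at hyt; linarith
    refine ⟨x, ⟨hx, by rw [mem_preimage, hxy]; exact ⟨hy01.1, hyγ⟩⟩, ?_⟩
    exact lt_of_le_of_lt (le_max_left _ _) hxt
  have hne : (Ioo (a i) (b i) ∩ F ⁻¹' Ioo 0 γ).Nonempty := by
    rcases key (a i) (S.ab_lt i) with ⟨x, hx, _⟩
    exact ⟨x, hx⟩
  refine csSup_eq_of_forall_le_of_forall_lt_exists_gt hne (fun x hx => hx.1.2.le) key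

/-- inf, antitone case, top subinterval -/
lemma sInf_pre_anti_hi (S : Sys a b ori F) {i : I} (hor : ¬ ori i) {γ : ℝ} (hγ : γ < 1) :
    sInf (Ioo (a i) (b i) ∩ F ⁻¹' Ioo γ 1) = a i := by
  have hm := S.anti i hor
  have key : ∀ w, a i < w → ∃ x ∈ Ioo (a i) (b i) ∩ F ⁻¹' Ioo γ 1, x < w := by
    intro w hw
    set t₀ := min w ((a i + b i)/2) with ht₀
    have h0 : t₀ ∈ Ioo (a i) (b i) := by
      constructor
      · apply lt_min hw; have := S.ab_lt i; linarith
      · have := S.ab_lt i; have : (a i + b i)/2 < b i := by linarith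
        exact lt_of_le_of_lt (min_le_right _ _) this
    have hF0 := S.F_Ioo_mem h0
    set y := (max γ (F t₀) + 1)/2 with hy
    have hmax : max γ (F t₀) < 1 := max_lt hγ hF0.2
    have hy01 : y ∈ Ioo (0:ℝ) 1 := by
      constructor
      · have := hF0.1; have := le_max_right γ (F t₀); simp only [hy]; linarith
      · simp only [hy]; linarith
    rcases S.surjIoo i hy01 with ⟨x, hx, hxy⟩
    have hyt : F t₀ < y := by
      have := le_max_right γ (F t₀); simp only [hy]; linarith
    have hyγ : γ < y := by
      have := le_max_left γ (F t₀); simp only [hy]; linarith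
    have hxt : x < t₀ := by
      by_contra h; push_neg at h
      rcases lt_or_eq_of_le h with h' | h'
      · have := hm h0 hx h'; rw [hxy] at this; linarith
      · rw [h', hxy] at hyt; linarith
    refine ⟨x, ⟨hx, by rw [mem_preimage, hxy]; exact ⟨hyγ, hy01.2⟩⟩, ?_⟩
    exact lt_of_lt_of_le hxt (min_le_left _ _)
  have hne : (Ioo (a i) (b i) ∩ F ⁻¹' Ioo γ 1).Nonempty := by
    rcases key (b i) (S.ab_lt i) with ⟨x, hx, _⟩
    exact ⟨x, hx⟩
  refine csInf_eq_of_forall_ge_of_forall_gt_exists_lt hne (fun x hx => hx.1.1.le) key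

end Sys

section Standalone
variable {α β : ℝ} {F : ℝ → ℝ}

lemma phi_mono (hm : StrictMonoOn F (Ioo α β))
    (hexp : ∀ u ∈ Ioo α β, ∀ v ∈ Ioo α β, u ≠ v → |u - v| < |F u - F v|) :
    ∀ u ∈ Ioo α β, ∀ v ∈ Ioo α β, u < v → v - u < F v - F u := by
  intro u hu v hv huv
  have h1 := hexp u hu v hv (ne_of_lt huv)
  have h2 : F u < F v := hm hu hv huv
  rw [abs_sub_comm, abs_of_pos (by linarith), abs_sub_comm, abs_of_pos (by linarith)] at h1
  exact h1

lemma modulus_mono (hab : α < β) {δ : ℝ} (hδ : 0 < δ) (hm : StrictMonoOn F (Ioo α β))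
    (hexp : ∀ u ∈ Ioo α β, ∀ v ∈ Ioo α β, u ≠ v → |u - v| < |F u - F v|) :
    ∃ c > 0, ∀ u ∈ Ioo α β, ∀ v ∈ Ioo α β, u + δ ≤ v → v - u + c ≤ F v - F u := by
  have hphi := phi_mono hm hexp
  by_cases hcase : β - α ≤ δ
  · refine ⟨1, one_pos, fun u hu v hv huv => ?_⟩
    exfalso
    have : v - u < β - α := by
      rcases hu with ⟨h1, h2⟩; rcases hv with ⟨h3, h4⟩; linarith
    linarith
  push_neg at hcase
  set N : ℕ := ⌈2*(β-α)/δ⌉₊ with hN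
  have hNge : 2*(β-α)/δ ≤ (N:ℝ) := Nat.le_ceil _
  have hN3 : 3 ≤ N := by
    have h2 : ((2:ℕ):ℝ) < 2*(β-α)/δ := by
      push_cast
      rw [lt_div_iff₀ hδ]; linarith
    have := Nat.lt_ceil.2 h2
    omega
  have hNpos : (0:ℝ) < N := by positivity
  set Δ : ℝ := (β-α)/N with hΔ
  have hΔpos : 0 < Δ := by
    apply div_pos; linarith; exact hNpos
  have hΔδ : 2*Δ ≤ δ := by
    have h1 : 2*(β-α) ≤ δ*N := by
      have := (div_le_iff₀ hδ).1 hNge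
      linarith
    rw [hΔ, ← mul_div_assoc, div_le_iff₀ hNpos]
    linarith
  set t : ℕ → ℝ := fun j => α + j*Δ with ht
  have htmem : ∀ j : ℕ, 1 ≤ j → j ≤ N - 1 → t j ∈ Ioo α β := by
    intro j h1 h2
    constructor
    · have : (0:ℝ) < j*Δ := by
        apply mul_pos _ hΔpos
        exact_mod_cast Nat.lt_of_lt_of_le Nat.zero_lt_one h1
      simp only [ht]; linarith
    · have hjN : (j:ℝ) < N := by exact_mod_cast Nat.lt_of_le_of_lt h2 (by omega)
      have : (j:ℝ)*Δ < N*Δ := by exact mul_lt_mul_of_pos_right hjN hΔpos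
      have hNΔ : (N:ℝ)*Δ = β - α := by
        rw [hΔ]; field_simp
      simp only [ht]; linarith
  have hgridne : (Finset.Icc 1 (N-2)).Nonempty := by
    refine ⟨1, Finset.mem_Icc.2 ⟨le_refl _, by omega⟩⟩
  obtain ⟨j₀, hj₀mem, hcval⟩ := Finset.exists_min_image (Finset.Icc 1 (N-2))
    (fun j => (F (t (j+1)) - t (j+1)) - (F (t j) - t j)) hgridne
  set c := (F (t (j₀+1)) - t (j₀+1)) - (F (t j₀) - t j₀) with hc
  have hcpos : 0 < c := by
    rcases Finset.mem_Icc.1 hj₀mem with ⟨hj1, hj2⟩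
    have hj3 : t j₀ ∈ Ioo α β := htmem j₀ hj1 (by omega)
    have hj4 : t (j₀+1) ∈ Ioo α β := htmem (j₀+1) (by omega) (by omega)
    have hlt : t j₀ < t (j₀+1) := by
      simp only [ht]; push_cast; nlinarith
    have := hphi (t j₀) hj3 (t (j₀+1)) hj4 hlt
    simp only [hc]
    linarith
  refine ⟨c, hcpos, fun u hu v hv huv => ?_⟩
  set j : ℕ := ⌈(u - α)/Δ⌉₊ with hj
  have huα : 0 < u - α := by linarith [hu.1]
  have hj1 : 1 ≤ j := by
    have h0 : ((0:ℕ):ℝ) < (u-α)/Δ := by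
      push_cast; exact div_pos huα hΔpos
    have := Nat.lt_ceil.2 h0
    omega
  have htju : u ≤ t j := by
    have h1 : (u - α)/Δ ≤ (j:ℝ) := Nat.le_ceil _
    rw [div_le_iff₀ hΔpos] at h1
    simp only [ht]; linarith
  have htju2 : t j < u + Δ := by
    have h1 : (j:ℝ) < (u - α)/Δ + 1 := by
      have := Nat.ceil_lt_add_one (le_of_lt (div_pos huα hΔpos))
      exact_mod_cast this
    have h2 : (j:ℝ)*Δ < ((u - α)/Δ + 1)*Δ := by
      exact mul_lt_mul_of_pos_right h1 hΔpos
    have h3 : ((u - α)/Δ + 1)*Δ = (u - α) + Δ := by field_simp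
    simp only [ht]; linarith
  have htj1v : t (j+1) ≤ v := by
    have : t (j+1) = t j + Δ := by simp only [ht]; push_cast; ring
    linarith
  have hjN2 : j ≤ N - 2 := by
    have h1 : t (j+1) < β := lt_of_le_of_lt htj1v hv.2
    have hNΔ : (N:ℝ)*Δ = β - α := by rw [hΔ]; field_simp
    have h2 : ((j:ℝ)+1)*Δ < (N:ℝ)*Δ := by
      simp only [ht] at h1; push_cast at h1 ⊢; nlinarith
    have h3 : ((j:ℝ)+1) < N := by
      exact lt_of_mul_lt_mul_right h2 hΔpos.le
    have : j + 1 < N := by exact_mod_cast h3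
    omega
  have hjmem : j ∈ Finset.Icc 1 (N-2) := Finset.mem_Icc.2 ⟨hj1, hjN2⟩
  have hcvalj : c ≤ (F (t (j+1)) - t (j+1)) - (F (t j) - t j) := hcval j hjmem
  have htjI : t j ∈ Ioo α β := htmem j hj1 (by omega)
  have htj1I : t (j+1) ∈ Ioo α β := htmem (j+1) (by omega) (by omega)
  -- φ monotone (non-strict, allowing equal endpoints)
  have hphile : ∀ x ∈ Ioo α β, ∀ y ∈ Ioo α β, x ≤ y → F x - x ≤ F y - y := by
    intro x hx y hy hxy
    rcases lt_or_eq_of_le hxy with h | h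
    · have := hphi x hx y hy h; linarith
    · subst h; exact le_refl _
  have h1 : F u - u ≤ F (t j) - t j := hphile u hu (t j) htjI htju
  have h2 : F (t (j+1)) - t (j+1) ≤ F v - v := hphile (t (j+1)) htj1I v hv htj1v
  linarith

lemma modulus_anti (hab : α < β) {δ : ℝ} (hδ : 0 < δ) (hm : StrictAntiOn F (Ioo α β))
    (hexp : ∀ u ∈ Ioo α β, ∀ v ∈ Ioo α β, u ≠ v → |u - v| < |F u - F v|) :
    ∃ c > 0, ∀ u ∈ Ioo α β, ∀ v ∈ Ioo α β, u + δ ≤ v → v - u + c ≤ F u - F v := by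
  have hm' : StrictMonoOn (fun x => -F x) (Ioo α β) := fun x hx y hy hxy =>
    neg_lt_neg (hm hx hy hxy)
  have hexp' : ∀ u ∈ Ioo α β, ∀ v ∈ Ioo α β, u ≠ v →
      |u - v| < |(fun x => -F x) u - (fun x => -F x) v| := by
    intro u hu v hv huv
    have := hexp u hu v hv huv
    simp only
    rw [neg_sub_neg]
    rw [abs_sub_comm (F u) (F v)] at this
    exact this
  rcases modulus_mono hab hδ hm' hexp' with ⟨c, hc, hrest⟩
  exact ⟨c, hc, fun u hu v hv huv => by
    have := hrest u hu v hv huv; linarith⟩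

lemma length_lt_one (hab : α < β) (hm : StrictMonoOn F (Ioo α β))
    (hexp : ∀ u ∈ Ioo α β, ∀ v ∈ Ioo α β, u ≠ v → |u - v| < |F u - F v|)
    (hbound : ∀ x ∈ Ioo α β, ∀ y ∈ Ioo α β, F x - F y < 1) :
    β - α < 1 := by
  have hphi := phi_mono hm hexp
  set u₀ := α + (β-α)/3 with hu₀
  set v₀ := α + 2*(β-α)/3 with hv₀
  have hu₀I : u₀ ∈ Ioo α β := by constructor <;> (simp only [hu₀]; linarith)
  have hv₀I : v₀ ∈ Ioo α β := by constructor <;> (simp only [hv₀]; linarith)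
  have hd : 0 < (F v₀ - v₀) - (F u₀ - u₀) := by
    have := hphi u₀ hu₀I v₀ hv₀I (by simp only [hu₀, hv₀]; linarith)
    linarith
  set δ' := (F v₀ - v₀) - (F u₀ - u₀) with hδ'
  by_contra h
  push_neg at h
  set ε := min ((β-α)/6) (δ'/4) with hε
  have hεpos : 0 < ε := lt_min (by linarith) (by linarith)
  set u := α + ε with hu
  set v := β - ε with hv
  have hε6 : ε ≤ (β-α)/6 := min_le_left _ _
  have hε4 : ε ≤ δ'/4 := min_le_right _ _
  have huI : u ∈ Ioo α β := by constructor <;> (simp only [hu]; linarith)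
  have hvI : v ∈ Ioo α β := by constructor <;> (simp only [hv]; linarith)
  have huu₀ : u ≤ u₀ := by simp only [hu, hu₀]; linarith
  have hvv₀ : v₀ ≤ v := by simp only [hv, hv₀]; linarith
  have hphile : ∀ x ∈ Ioo α β, ∀ y ∈ Ioo α β, x ≤ y → F x - x ≤ F y - y := by
    intro x hx y hy hxy
    rcases lt_or_eq_of_le hxy with h' | h'
    · have := hphi x hx y hy h'; linarith
    · subst h'; exact le_refl _
  have h1 : F u - u ≤ F u₀ - u₀ := hphile u huI u₀ hu₀I huu₀
  have h2 : F v₀ - v₀ ≤ F v - v := hphile v₀ hv₀I v hvI hvv₀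
  have h3 : F v - F u < 1 := hbound v hvI u huI
  have h4 : v - u = (β - α) - 2*ε := by simp only [hu, hv]; ring
  -- F v - F u ≥ (v-u) + δ' ≥ 1 - 2ε + δ' ≥ 1 + δ'/2 > 1
  have h5 : F v - F u = (v - u) + ((F v - v) - (F u - u)) := by ring
  nlinarith

lemma length_lt_one_anti (hab : α < β) (hm : StrictAntiOn F (Ioo α β))
    (hexp : ∀ u ∈ Ioo α β, ∀ v ∈ Ioo α β, u ≠ v → |u - v| < |F u - F v|)
    (hbound : ∀ x ∈ Ioo α β, ∀ y ∈ Ioo α β, F x - F y < 1) :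
    β - α < 1 := by
  have hm' : StrictMonoOn (fun x => -F x) (Ioo α β) := fun x hx y hy hxy =>
    neg_lt_neg (hm hx hy hxy)
  have hexp' : ∀ u ∈ Ioo α β, ∀ v ∈ Ioo α β, u ≠ v →
      |u - v| < |(fun x => -F x) u - (fun x => -F x) v| := by
    intro u hu v hv huv
    have := hexp u hu v hv huv
    simp only
    rw [neg_sub_neg]
    rw [abs_sub_comm (F u) (F v)] at this
    exact this
  have hbound' : ∀ x ∈ Ioo α β, ∀ y ∈ Ioo α β,
      (fun x => -F x) x - (fun x => -F x) y < 1 := by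
    intro x hx y hy
    have := hbound y hy x hx
    simp only; linarith
  exact length_lt_one hab hm' hexp' hbound'

lemma tendsto_mono_left (hab : α < β) (hm : StrictMonoOn F (Ioo α β))
    (himg : F '' Ioo α β = Ioo 0 1) :
    Tendsto F (nhdsWithin α (Ioo α β)) (𝓝 0) := by
  rw [Metric.tendsto_nhdsWithin_nhds]
  intro ε hε
  have hy01 : (min ε 1)/2 ∈ Ioo (0:ℝ) 1 := by
    constructor
    · have := lt_min hε one_pos; linarith
    · have := min_le_right ε 1; linarith
  have : (min ε 1)/2 ∈ F '' Ioo α β := himg ▸ hy01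
  rcases this with ⟨x₀, hx₀, hx₀y⟩
  refine ⟨x₀ - α, by linarith [hx₀.1], ?_⟩
  intro x hx hd
  have hxmem : F x ∈ Ioo (0:ℝ) 1 := himg ▸ mem_image_of_mem F hx
  have hxlt : x < x₀ := by
    rw [Real.dist_eq, abs_of_pos (by linarith [hx.1])] at hd
    linarith
  have hFlt : F x < F x₀ := hm hx hx₀ hxlt
  rw [Real.dist_eq, sub_zero, abs_of_pos hxmem.1]
  rw [hx₀y] at hFlt
  have := min_le_left ε 1
  linarith

lemma tendsto_mono_right (hab : α < β) (hm : StrictMonoOn F (Ioo α β))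
    (himg : F '' Ioo α β = Ioo 0 1) :
    Tendsto F (nhdsWithin β (Ioo α β)) (𝓝 1) := by
  rw [Metric.tendsto_nhdsWithin_nhds]
  intro ε hε
  have hy01 : 1 - (min ε 1)/2 ∈ Ioo (0:ℝ) 1 := by
    constructor
    · have := min_le_right ε 1; linarith
    · have := lt_min hε one_pos; linarith
  have : 1 - (min ε 1)/2 ∈ F '' Ioo α β := himg ▸ hy01
  rcases this with ⟨x₀, hx₀, hx₀y⟩
  refine ⟨β - x₀, by linarith [hx₀.2], ?_⟩
  intro x hx hd
  have hxmem : F x ∈ Ioo (0:ℝ) 1 := himg ▸ mem_image_of_mem F hx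
  have hxgt : x₀ < x := by
    rw [Real.dist_eq, abs_of_neg (by linarith [hx.2])] at hd
    linarith
  have hFgt : F x₀ < F x := hm hx₀ hx hxgt
  rw [Real.dist_eq, abs_of_neg (by linarith [hxmem.2])]
  rw [hx₀y] at hFgt
  have := min_le_left ε 1
  linarith

lemma tendsto_anti_left (hab : α < β) (hm : StrictAntiOn F (Ioo α β))
    (himg : F '' Ioo α β = Ioo 0 1) :
    Tendsto F (nhdsWithin α (Ioo α β)) (𝓝 1) := by
  have hm' : StrictMonoOn (fun x => 1 - F x) (Ioo α β) := fun x hx y hy hxy => by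
    simp only; linarith [hm hx hy hxy]
  have himg' : (fun x => 1 - F x) '' Ioo α β = Ioo 0 1 := by
    ext y
    constructor
    · rintro ⟨x, hx, rfl⟩
      have : F x ∈ Ioo (0:ℝ) 1 := himg ▸ mem_image_of_mem F hx
      exact ⟨by simp only; linarith [this.2], by simp only; linarith [this.1]⟩
    · intro hy
      have : 1 - y ∈ Ioo (0:ℝ) 1 := ⟨by linarith [hy.2], by linarith [hy.1]⟩
      rw [← himg] at this
      rcases this with ⟨x, hx, hxe⟩
      exact ⟨x, hx, by simp only; linarith⟩
  have h := tendsto_mono_left hab hm' himg'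
  have : Tendsto (fun x => 1 - (1 - F x)) (nhdsWithin α (Ioo α β)) (𝓝 (1 - 0)) :=
    Tendsto.const_sub 1 h
  simpa using this

lemma tendsto_anti_right (hab : α < β) (hm : StrictAntiOn F (Ioo α β))
    (himg : F '' Ioo α β = Ioo 0 1) :
    Tendsto F (nhdsWithin β (Ioo α β)) (𝓝 0) := by
  have hm' : StrictMonoOn (fun x => 1 - F x) (Ioo α β) := fun x hx y hy hxy => by
    simp only; linarith [hm hx hy hxy]
  have himg' : (fun x => 1 - F x) '' Ioo α β = Ioo 0 1 := by
    ext y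
    constructor
    · rintro ⟨x, hx, rfl⟩
      have : F x ∈ Ioo (0:ℝ) 1 := himg ▸ mem_image_of_mem F hx
      exact ⟨by simp only; linarith [this.2], by simp only; linarith [this.1]⟩
    · intro hy
      have : 1 - y ∈ Ioo (0:ℝ) 1 := ⟨by linarith [hy.2], by linarith [hy.1]⟩
      rw [← himg] at this
      rcases this with ⟨x, hx, hxe⟩
      exact ⟨x, hx, by simp only; linarith⟩
  have h := tendsto_mono_right hab hm' himg'
  have : Tendsto (fun x => 1 - (1 - F x)) (nhdsWithin β (Ioo α β)) (𝓝 (1 - 1)) :=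
    Tendsto.const_sub 1 h
  simpa using this

end Standalone

/-- `z` follows the symbolic itinerary `s` under `F`. -/
def Follows (F : ℝ → ℝ) (a b : I → ℝ) (s : ℕ → I) (z : ℝ) : Prop :=
  ∀ n, F^[n] z ∈ Ioo (a (s n)) (b (s n))

namespace Sys

lemma modulus (S : Sys a b ori F) (i : I) {δ : ℝ} (hδ : 0 < δ) :
    ∃ c > 0, ∀ u ∈ Ioo (a i) (b i), ∀ v ∈ Ioo (a i) (b i), u + δ ≤ v →
      v - u + c ≤ |F u - F v| := by
  by_cases hor : ori i
  · rcases modulus_mono (S.ab_lt i) hδ (S.mono i hor) (S.expa i) with ⟨c, hc, hrest⟩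
    refine ⟨c, hc, fun u hu v hv huv => ?_⟩
    have h1 := hrest u hu v hv huv
    have h2 : F v - F u ≤ |F u - F v| := by
      rw [abs_sub_comm]; exact le_abs_self _
    linarith
  · rcases modulus_anti (S.ab_lt i) hδ (S.anti i hor) (S.expa i) with ⟨c, hc, hrest⟩
    refine ⟨c, hc, fun u hu v hv huv => ?_⟩
    have h1 := hrest u hu v hv huv
    have h2 : F u - F v ≤ |F u - F v| := le_abs_self _
    linarith

lemma a_ne (S : Sys a b ori F) {i j : I} (hne : i ≠ j) : a i ≠ a j := by
  intro h
  set t := (a j + min (b i) (b j))/2 with htdef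
  have h1 : a j < min (b i) (b j) := lt_min (h ▸ S.ab_lt i) (S.ab_lt j)
  have ht1 : t ∈ Ioo (a j) (b j) := by
    constructor
    · simp only [htdef]; linarith
    · have := min_le_right (b i) (b j); simp only [htdef]; linarith
  have ht2 : t ∈ Ioo (a i) (b i) := by
    constructor
    · rw [h]; exact ht1.1
    · have := min_le_left (b i) (b j); simp only [htdef]; linarith
  exact Set.disjoint_left.1 (S.disj hne) ht2 ht1

lemma order_sep (S : Sys a b ori F) {i j : I} (hne : i ≠ j) (hab : a i < a j) :
    b i ≤ a j := by
  by_contra h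
  push_neg at h
  set t := (a j + min (b i) (b j))/2 with htdef
  have h1 : a j < min (b i) (b j) := lt_min h (S.ab_lt j)
  have ht1 : t ∈ Ioo (a j) (b j) := by
    constructor
    · simp only [htdef]; linarith
    · have := min_le_right (b i) (b j); simp only [htdef]; linarith
  have ht2 : t ∈ Ioo (a i) (b i) := by
    constructor
    · exact lt_trans hab ht1.1
    · have := min_le_left (b i) (b j); simp only [htdef]; linarith
  exact Set.disjoint_left.1 (S.disj hne) ht2 ht1

lemma finite_long (S : Sys a b ori F) {δ : ℝ} (hδ : 0 < δ) :
    {i : I | a i + δ ≤ b i}.Finite := by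
  apply Set.Finite.of_finite_image (f := fun i => ⌊a i / δ⌋)
  · apply Set.Finite.subset (Set.finite_Icc (0:ℤ) ⌈1/δ⌉)
    rintro z ⟨i, _, rfl⟩
    constructor
    · exact Int.floor_nonneg.2 (div_nonneg (S.a_nonneg i) hδ.le)
    · have h1 : a i / δ ≤ 1/δ :=
        (div_le_div_iff_of_pos_right hδ).mpr (le_trans (S.ab_lt i).le (S.b_le_one i))
      exact le_trans (Int.floor_le_floor h1) (Int.floor_le_ceil _)
  · intro i hi j hj hfe
    by_contra hne
    have main : ∀ p q : I, p ≠ q → a p + δ ≤ b p → a p < a q →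
        ⌊a p / δ⌋ < ⌊a q / δ⌋ := by
      intro p q hpq hplen hlt
      have hsep := S.order_sep hpq hlt
      have h1 : a p + δ ≤ a q := le_trans hplen hsep
      have h2 : a p/δ + 1 ≤ a q/δ := by
        rw [show a p/δ + 1 = (a p + δ)/δ by field_simp]
        exact (div_le_div_iff_of_pos_right hδ).mpr h1
      have h3 : ⌊a p/δ + 1⌋ ≤ ⌊a q/δ⌋ := Int.floor_le_floor h2
      have h4 : ⌊a p/δ + 1⌋ = ⌊a p/δ⌋ + 1 := by
        rw [show (1:ℝ) = ((1:ℤ):ℝ) by norm_num, Int.floor_add_intCast]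
      omega
    rcases lt_trichotomy (a i) (a j) with h | h | h
    · exact absurd hfe (ne_of_lt (main i j hne hi h))
    · exact S.a_ne hne h
    · exact absurd hfe.symm (ne_of_lt (main j i (Ne.symm hne) hj h))

lemma follows_sub_lt (S : Sys a b ori F) {u v α β : ℝ} (hu : u ∈ Ioo α β)
    (hv : v ∈ Ioo α β) : |u - v| < β - α := by
  rw [abs_sub_lt_iff]
  constructor <;> [linarith [hu.2, hv.1]; linarith [hv.2, hu.1]]

lemma follower_unique (S : Sys a b ori F) {s : ℕ → I} {z z' : ℝ}
    (hz : Follows F a b s z) (hz' : Follows F a b s z') : z = z' := by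
  by_contra hne
  set δ := |z - z'| with hδdef
  have hδ : 0 < δ := abs_pos.2 (sub_ne_zero.2 hne)
  have hTfin := S.finite_long hδ
  have hlen : ∀ n : ℕ, a (s n) + δ ≤ b (s n) → s n ∈ hTfin.toFinset := by
    intro n h
    rw [Set.Finite.mem_toFinset]; exact h
  have hlen0 : ∀ n : ℕ, δ ≤ |F^[n] z - F^[n] z'| → s n ∈ hTfin.toFinset := by
    intro n h
    apply hlen
    have := S.follows_sub_lt (hz n) (hz' n)
    linarith
  have hs0 : s 0 ∈ hTfin.toFinset := by
    apply hlen0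
    simp [hδdef]
  set cfun : I → ℝ := fun i => Classical.choose (S.modulus i hδ) with hcfun
  have hcspec : ∀ i : I, cfun i > 0 ∧ ∀ u ∈ Ioo (a i) (b i), ∀ v ∈ Ioo (a i) (b i),
      u + δ ≤ v → v - u + cfun i ≤ |F u - F v| := by
    intro i
    have := Classical.choose_spec (S.modulus i hδ)
    exact ⟨this.1, this.2⟩
  obtain ⟨i₀, hi₀mem, hi₀min⟩ := Finset.exists_min_image hTfin.toFinset cfun ⟨s 0, hs0⟩
  set c := cfun i₀ with hcdef
  have hcpos : 0 < c := (hcspec i₀).1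
  have key : ∀ n : ℕ, δ + n * c ≤ |F^[n] z - F^[n] z'| := by
    intro n
    induction n with
    | zero => simp [hδdef]
    | succ n ih =>
      have hnc : (0:ℝ) ≤ n * c := by positivity
      have hdn : δ ≤ |F^[n] z - F^[n] z'| := by linarith
      set u := F^[n] z with hudef
      set v := F^[n] z' with hvdef
      have hu : u ∈ Ioo (a (s n)) (b (s n)) := hz n
      have hv : v ∈ Ioo (a (s n)) (b (s n)) := hz' n
      have hsn : s n ∈ hTfin.toFinset := hlen0 n hdn
      have hcsn : c ≤ cfun (s n) := hi₀min (s n) hsn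
      have hiter : F^[n+1] z = F u := by rw [hudef, Function.iterate_succ_apply']
      have hiter' : F^[n+1] z' = F v := by rw [hvdef, Function.iterate_succ_apply']
      rcases le_total u v with hle | hle
      · have huv : u + δ ≤ v := by
          rw [abs_of_nonpos (by linarith : u - v ≤ 0)] at hdn
          linarith
        have := (hcspec (s n)).2 u hu v hv huv
        rw [hiter, hiter']
        have habs : v - u = |u - v| := by
          rw [abs_of_nonpos (by linarith : u - v ≤ 0)]; ring
        push_cast
        linarith
      · have huv : v + δ ≤ u := by
          rw [abs_of_nonneg (by linarith : 0 ≤ u - v)] at hdn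
          linarith
        have := (hcspec (s n)).2 v hv u hu huv
        rw [hiter, hiter', abs_sub_comm]
        have habs : u - v = |u - v| := by
          rw [abs_of_nonneg (by linarith : 0 ≤ u - v)]
        push_cast
        linarith
  obtain ⟨n, hn⟩ := exists_nat_gt ((1 - δ)/c)
  have h1 : 1 - δ < n * c := by
    rw [div_lt_iff₀ hcpos] at hn
    linarith
  have h2 := key n
  have h3 : |F^[n] z - F^[n] z'| < 1 := by
    have hu := S.subIoo (s n) (hz n)
    have hv := S.subIoo (s n) (hz' n)
    rw [abs_sub_lt_iff]
    constructor <;> [linarith [hu.2, hv.1]; linarith [hv.2, hu.1]]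
  linarith

end Sys

/-- cylinder sets -/
def Cyl (F : ℝ → ℝ) (a b : I → ℝ) : (ℕ → I) → ℕ → Set ℝ
  | _, 0 => univ
  | s, n+1 => Ioo (a (s 0)) (b (s 0)) ∩ F ⁻¹' (Cyl F a b (fun k => s (k+1)) n)

lemma mem_cyl {F : ℝ → ℝ} : ∀ {n : ℕ} {s : ℕ → I} {t : ℝ},
    t ∈ Cyl F a b s n ↔ ∀ k < n, F^[k] t ∈ Ioo (a (s k)) (b (s k)) := by
  intro n
  induction n with
  | zero => intro s t; simp [Cyl]
  | succ n ih =>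
    intro s t
    constructor
    · rintro ⟨h0, h1⟩
      intro k hk
      rcases k with _ | k
      · simpa using h0
      · have := ih.1 h1 k (by omega)
        rw [Function.iterate_succ_apply]
        simpa using this
    · intro h
      refine ⟨by simpa using h 0 (by omega), ?_⟩
      apply ih.2
      intro k hk
      rw [← Function.iterate_succ_apply]
      exact h (k+1) (by omega)

lemma follows_iff_cyl {F : ℝ → ℝ} {s : ℕ → I} {z : ℝ} :
    Follows F a b s z ↔ ∀ n, z ∈ Cyl F a b s n := by
  constructor
  · intro h n
    rw [mem_cyl]
    intro k _
    exact h k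
  · intro h n
    have := (mem_cyl).1 (h (n+1))
    exact this n (Nat.lt_succ_self n)

lemma cyl_subset_Ioo {F : ℝ → ℝ} {s : ℕ → I} {n : ℕ} :
    Cyl F a b s (n+1) ⊆ Ioo (a (s 0)) (b (s 0)) := inter_subset_left

lemma cyl_antitone {F : ℝ → ℝ} {s : ℕ → I} {m n : ℕ} (h : m ≤ n) :
    Cyl F a b s n ⊆ Cyl F a b s m := by
  intro t ht
  rw [mem_cyl] at ht ⊢
  exact fun k hk => ht k (lt_of_lt_of_le hk h)

namespace Sys

lemma cyl_nonempty (S : Sys a b ori F) : ∀ (n : ℕ) (s : ℕ → I), (Cyl F a b s n).Nonempty := by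
  intro n
  induction n with
  | zero => exact fun s => ⟨0, trivial⟩
  | succ n ih =>
    intro s
    rcases n with _ | m
    · have hab := S.ab_lt (s 0)
      exact ⟨(a (s 0) + b (s 0))/2, ⟨by linarith, by linarith⟩, trivial⟩
    · obtain ⟨w, hw⟩ := ih (fun k => s (k+1))
      have hw1 : w ∈ Ioo (a (s 1)) (b (s 1)) := cyl_subset_Ioo hw
      have hw01 : w ∈ Ioo (0:ℝ) 1 := S.subIoo (s 1) hw1
      obtain ⟨x, hx, hxw⟩ := S.surjIoo (s 0) hw01
      exact ⟨x, hx, by rw [Set.mem_preimage, hxw]; exact hw⟩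

lemma cyl_open (S : Sys a b ori F) : ∀ (n : ℕ) (s : ℕ → I), IsOpen (Cyl F a b s n) := by
  intro n
  induction n with
  | zero => exact fun s => isOpen_univ
  | succ n ih =>
    intro s
    exact ContinuousOn.isOpen_inter_preimage (S.cont (s 0)) isOpen_Ioo (ih _)

lemma cyl_ordconn (S : Sys a b ori F) : ∀ (n : ℕ) (s : ℕ → I),
    ∀ x ∈ Cyl F a b s n, ∀ y ∈ Cyl F a b s n, ∀ t, x ≤ t → t ≤ y → t ∈ Cyl F a b s n := by
  intro n
  induction n with
  | zero => exact fun s x _ y _ t _ _ => trivial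
  | succ n ih =>
    intro s x hx y hy t hxt hty
    have hxI : x ∈ Ioo (a (s 0)) (b (s 0)) := hx.1
    have hyI : y ∈ Ioo (a (s 0)) (b (s 0)) := hy.1
    have htI : t ∈ Ioo (a (s 0)) (b (s 0)) := ⟨lt_of_lt_of_le hxI.1 hxt, lt_of_le_of_lt hty hyI.2⟩
    refine ⟨htI, ?_⟩
    by_cases hor : ori (s 0)
    · have hmle := (S.mono (s 0) hor).monotoneOn
      exact ih _ (F x) hx.2 (F y) hy.2 (F t) (hmle hxI htI hxt) (hmle htI hyI hty)
    · have hmle := (S.anti (s 0) hor).antitoneOn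
      exact ih _ (F y) hy.2 (F x) hx.2 (F t) (hmle htI hyI hty) (hmle hxI htI hxt)

lemma cyl_image (S : Sys a b ori F) (s : ℕ → I) (n : ℕ) :
    F '' Cyl F a b s (n+2) = Cyl F a b (fun k => s (k+1)) (n+1) := by
  have h1 : Cyl F a b s (n+2) =
      Ioo (a (s 0)) (b (s 0)) ∩ F ⁻¹' (Cyl F a b (fun k => s (k+1)) (n+1)) := rfl
  rw [h1, Set.image_inter_preimage, S.img (s 0)]
  apply Set.inter_eq_self_of_subset_right
  exact fun t ht => S.subIoo (s 1) (cyl_subset_Ioo ht)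

end Sys

lemma open_ordconn_eq_Ioo {A : Set ℝ} (hA : IsOpen A) (hne : A.Nonempty)
    (hbb : BddBelow A) (hba : BddAbove A)
    (hconn : ∀ x ∈ A, ∀ y ∈ A, ∀ t, x ≤ t → t ≤ y → t ∈ A) :
    A = Ioo (sInf A) (sSup A) := by
  ext t
  constructor
  · intro ht
    constructor
    · rcases lt_or_eq_of_le (csInf_le hbb ht) with h | h
      · exact h
      · exfalso
        rcases Metric.isOpen_iff.1 hA t ht with ⟨ε, hε, hball⟩
        have : t - ε/2 ∈ A := by
          apply hball
          rw [Metric.mem_ball, Real.dist_eq]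
          rw [abs_of_neg (by linarith)]
          linarith
        have := csInf_le hbb this
        rw [← h] at this
        linarith
    · rcases lt_or_eq_of_le (le_csSup hba ht) with h | h
      · exact h
      · exfalso
        rcases Metric.isOpen_iff.1 hA t ht with ⟨ε, hε, hball⟩
        have : t + ε/2 ∈ A := by
          apply hball
          rw [Metric.mem_ball, Real.dist_eq]
          rw [abs_of_pos (by linarith)]
          linarith
        have := le_csSup hba this
        rw [h] at this
        linarith
  · intro ht
    obtain ⟨x, hx, hxt⟩ := exists_lt_of_csInf_lt hne ht.1
    obtain ⟨y, hy, hty⟩ := exists_lt_of_lt_csSup hne ht.2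
    exact hconn x hx y hy t hxt.le hty.le

namespace Sys

lemma cyl_eq_Ioo (S : Sys a b ori F) (s : ℕ → I) (n : ℕ) :
    Cyl F a b s (n+1) = Ioo (sInf (Cyl F a b s (n+1))) (sSup (Cyl F a b s (n+1))) := by
  apply open_ordconn_eq_Ioo (S.cyl_open _ _) (S.cyl_nonempty _ _)
  · exact BddBelow.mono cyl_subset_Ioo bddBelow_Ioo
  · exact BddAbove.mono cyl_subset_Ioo bddAbove_Ioo
  · exact S.cyl_ordconn _ _

lemma cyl_squeeze (S : Sys a b ori F) (s : ℕ → I) :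
    ∃ w : ℝ, Tendsto (fun n => sInf (Cyl F a b s (n+1))) atTop (𝓝 w) ∧
      Tendsto (fun n => sSup (Cyl F a b s (n+1))) atTop (𝓝 w) ∧
      (∀ z, Follows F a b s z → z = w) ∧
      (∀ n, sInf (Cyl F a b s (n+1)) ≤ w ∧ w ≤ sSup (Cyl F a b s (n+1))) := by
  set P : ℕ → ℝ := fun n => sInf (Cyl F a b s (n+1)) with hP
  set Q : ℕ → ℝ := fun n => sSup (Cyl F a b s (n+1)) with hQ
  have hbb : ∀ n, BddBelow (Cyl F a b s (n+1)) :=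
    fun n => BddBelow.mono cyl_subset_Ioo bddBelow_Ioo
  have hba : ∀ n, BddAbove (Cyl F a b s (n+1)) :=
    fun n => BddAbove.mono cyl_subset_Ioo bddAbove_Ioo
  have hne : ∀ n, (Cyl F a b s (n+1)).Nonempty := fun n => S.cyl_nonempty _ _
  have hPmono : Monotone P := by
    intro m n hmn
    exact csInf_le_csInf (hbb m) (hne n) (cyl_antitone (by omega))
  have hQanti : Antitone Q := by
    intro m n hmn
    exact csSup_le_csSup (hba m) (hne n) (cyl_antitone (by omega))
  have hPQ : ∀ m n, P m ≤ Q n := by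
    intro m n
    obtain ⟨e, he⟩ := hne (max m n)
    calc P m ≤ P (max m n) := hPmono (le_max_left _ _)
    _ ≤ e := csInf_le (hbb _) he
    _ ≤ Q (max m n) := le_csSup (hba _) he
    _ ≤ Q n := hQanti (le_max_right _ _)
  have hbaP : BddAbove (Set.range P) := ⟨Q 0, by rintro x ⟨n, rfl⟩; exact hPQ n 0⟩
  have hbbQ : BddBelow (Set.range Q) := ⟨P 0, by rintro x ⟨n, rfl⟩; exact hPQ 0 n⟩
  have hPlim : Tendsto P atTop (𝓝 (⨆ n, P n)) := tendsto_atTop_ciSup hPmono hbaP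
  have hQlim : Tendsto Q atTop (𝓝 (⨅ n, Q n)) := tendsto_atTop_ciInf hQanti hbbQ
  set p := ⨆ n, P n with hp
  set q := ⨅ n, Q n with hq
  have hpq : p ≤ q := by
    apply ciSup_le
    intro n
    exact le_ciInf (fun m => hPQ n m)
  have hfollow : ∀ t, p < t → t < q → Follows F a b s t := by
    intro t h1 h2
    rw [follows_iff_cyl]
    intro n
    rcases n with _ | n
    · trivial
    · have hPt : P n < t := lt_of_le_of_lt (le_ciSup hbaP n) h1
      have hQT : t < Q n := lt_of_lt_of_le h2 (ciInf_le hbbQ n)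
      rw [S.cyl_eq_Ioo s n]
      exact ⟨hPt, hQT⟩
  have hpqe : p = q := by
    by_contra hpe
    have hlt : p < q := lt_of_le_of_ne hpq hpe
    have h1 : Follows F a b s ((2*p+q)/3) := hfollow _ (by linarith) (by linarith)
    have h2 : Follows F a b s ((p+2*q)/3) := hfollow _ (by linarith) (by linarith)
    have := S.follower_unique h1 h2
    have : p = q := by linarith [this]
    exact hpe this
  refine ⟨p, hPlim, ?_, ?_, ?_⟩
  · rw [hpqe]; exact hQlim
  · intro z hz
    have hmem := (follows_iff_cyl.1 hz)
    have h1 : ∀ n, P n ≤ z := fun n => csInf_le (hbb n) (hmem (n+1))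
    have h2 : ∀ n, z ≤ Q n := fun n => le_csSup (hba n) (hmem (n+1))
    have hle : p ≤ z := ciSup_le h1
    have hge : z ≤ q := le_ciInf h2
    rw [← hpqe] at hge
    linarith
  · intro n
    constructor
    · exact le_ciSup hbaP n
    · rw [hpqe]; exact ciInf_le hbbQ n

end Sys

/-- shift of a symbolic sequence -/
def sh (s : ℕ → I) : ℕ → I := fun k => s (k+1)

lemma sh_iter_apply (s : ℕ → I) (j k : ℕ) : (sh^[j] s) k = s (k + j) := by
  induction j generalizing s k with
  | zero => rfl
  | succ j ih =>
    rw [Function.iterate_succ_apply]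
    rw [ih]
    rfl

lemma sh_zero (s : ℕ → I) (j : ℕ) : (sh^[j] s) 0 = s j := by
  rw [sh_iter_apply]
  congr 1
  omega

lemma cyl_one {F : ℝ → ℝ} (s : ℕ → I) :
    Cyl F a b s 1 = Ioo (a (s 0)) (b (s 0)) := by
  show Ioo (a (s 0)) (b (s 0)) ∩ F ⁻¹' (Cyl F a b _ 0) = _
  show Ioo (a (s 0)) (b (s 0)) ∩ F ⁻¹' univ = _
  simp

lemma cyl_succ {F : ℝ → ℝ} (s : ℕ → I) (n : ℕ) :
    Cyl F a b s (n+1) = Ioo (a (s 0)) (b (s 0)) ∩ F ⁻¹' (Cyl F a b (sh s) n) := rfl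

namespace Sys

lemma cyl_image' (S : Sys a b ori F) (s : ℕ → I) (n : ℕ) :
    F '' Cyl F a b s (n+2) = Cyl F a b (sh s) (n+1) := S.cyl_image s n

lemma cyl_inf_lt_sup (S : Sys a b ori F) (s : ℕ → I) (n : ℕ) :
    sInf (Cyl F a b s (n+1)) < sSup (Cyl F a b s (n+1)) := by
  have h := S.cyl_nonempty (n+1) s
  rw [S.cyl_eq_Ioo s n] at h
  exact nonempty_Ioo.1 h

lemma cyl_inf_ge (S : Sys a b ori F) (s : ℕ → I) (n : ℕ) :
    a (s 0) ≤ sInf (Cyl F a b s (n+1)) :=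
  le_csInf (S.cyl_nonempty (n+1) s) (fun e he => (cyl_subset_Ioo he).1.le)

lemma cyl_sup_le (S : Sys a b ori F) (s : ℕ → I) (n : ℕ) :
    sSup (Cyl F a b s (n+1)) ≤ b (s 0) :=
  csSup_le (S.cyl_nonempty (n+1) s) (fun e he => (cyl_subset_Ioo he).2.le)

/-- if cylinders touch the right endpoint at every level, the next-level cylinders
reach `1` (monotone branch) resp. `0` (antitone branch). -/
lemma core_touch_right (S : Sys a b ori F) (s : ℕ → I)
    (hRT : ∀ n : ℕ, sSup (Cyl F a b s (n+1)) = b (s 0)) :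
    (ori (s 0) → ∀ n : ℕ, sSup (Cyl F a b (sh s) (n+1)) = 1) ∧
    (¬ ori (s 0) → ∀ n : ℕ, sInf (Cyl F a b (sh s) (n+1)) = 0) := by
  have main : ∀ n : ℕ, (ori (s 0) → sSup (Cyl F a b (sh s) (n+1)) = 1) ∧
      (¬ ori (s 0) → sInf (Cyl F a b (sh s) (n+1)) = 0) := by
    intro n
    have h1 : Cyl F a b (sh s) (n+1) = F '' Cyl F a b s (n+2) := (S.cyl_image' s n).symm
    set P := sInf (Cyl F a b s (n+2)) with hP
    set Q := sSup (Cyl F a b s (n+2)) with hQ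
    have h2 : Cyl F a b s (n+2) = Ioo P Q := S.cyl_eq_Ioo s (n+1)
    have hQb : Q = b (s 0) := hRT (n+1)
    have hPa : a (s 0) ≤ P := S.cyl_inf_ge s (n+1)
    have hPQ : P < Q := S.cyl_inf_lt_sup s (n+1)
    rcases lt_or_eq_of_le hPa with hPa' | hPa'
    · -- P interior
      have hPI : P ∈ Ioo (a (s 0)) (b (s 0)) := ⟨hPa', by rw [← hQb]; exact hPQ⟩
      constructor
      · intro hor
        rw [h1, h2, hQb, S.image_Ioo_right_mono hor hPI]
        exact csSup_Ioo (S.F_Ioo_mem hPI).2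
      · intro hor
        rw [h1, h2, hQb, S.image_Ioo_right_anti hor hPI]
        exact csInf_Ioo (S.F_Ioo_mem hPI).1
    · -- P = a : full interval
      have himg : F '' Ioo P Q = Ioo 0 1 := by
        rw [← hPa', hQb]; exact S.img (s 0)
      constructor
      · intro _
        rw [h1, h2, himg]
        exact csSup_Ioo one_pos
      · intro _
        rw [h1, h2, himg]
        exact csInf_Ioo one_pos
  exact ⟨fun hor n => (main n).1 hor, fun hor n => (main n).2 hor⟩

lemma core_touch_left (S : Sys a b ori F) (s : ℕ → I)
    (hLT : ∀ n : ℕ, sInf (Cyl F a b s (n+1)) = a (s 0)) :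
    (ori (s 0) → ∀ n : ℕ, sInf (Cyl F a b (sh s) (n+1)) = 0) ∧
    (¬ ori (s 0) → ∀ n : ℕ, sSup (Cyl F a b (sh s) (n+1)) = 1) := by
  have main : ∀ n : ℕ, (ori (s 0) → sInf (Cyl F a b (sh s) (n+1)) = 0) ∧
      (¬ ori (s 0) → sSup (Cyl F a b (sh s) (n+1)) = 1) := by
    intro n
    have h1 : Cyl F a b (sh s) (n+1) = F '' Cyl F a b s (n+2) := (S.cyl_image' s n).symm
    set P := sInf (Cyl F a b s (n+2)) with hP
    set Q := sSup (Cyl F a b s (n+2)) with hQ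
    have h2 : Cyl F a b s (n+2) = Ioo P Q := S.cyl_eq_Ioo s (n+1)
    have hPa : P = a (s 0) := hLT (n+1)
    have hQb : Q ≤ b (s 0) := S.cyl_sup_le s (n+1)
    have hPQ : P < Q := S.cyl_inf_lt_sup s (n+1)
    rcases lt_or_eq_of_le hQb with hQb' | hQb'
    · have hQI : Q ∈ Ioo (a (s 0)) (b (s 0)) := ⟨by rw [← hPa]; exact hPQ, hQb'⟩
      constructor
      · intro hor
        rw [h1, h2, hPa, S.image_Ioo_left_mono hor hQI]
        exact csInf_Ioo (S.F_Ioo_mem hQI).1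
      · intro hor
        rw [h1, h2, hPa, S.image_Ioo_left_anti hor hQI]
        exact csSup_Ioo (S.F_Ioo_mem hQI).2
    · have himg : F '' Ioo P Q = Ioo 0 1 := by
        rw [hPa, hQb']; exact S.img (s 0)
      constructor
      · intro _
        rw [h1, h2, himg]
        exact csInf_Ioo one_pos
      · intro _
        rw [h1, h2, himg]
        exact csSup_Ioo one_pos
  exact ⟨fun hor n => (main n).1 hor, fun hor n => (main n).2 hor⟩

lemma core_sup1 (S : Sys a b ori F) (s : ℕ → I)
    (h : ∀ n : ℕ, sSup (Cyl F a b s (n+1)) = 1) :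
    b (s 0) = 1 ∧ (∀ n : ℕ, sSup (Cyl F a b s (n+1)) = b (s 0)) := by
  have hb : b (s 0) = 1 := by
    have h1 := S.cyl_sup_le s 0
    rw [h 0] at h1
    have h2 := S.b_le_one (s 0)
    linarith
  exact ⟨hb, fun n => by rw [h n, hb]⟩

lemma core_inf0 (S : Sys a b ori F) (s : ℕ → I)
    (h : ∀ n : ℕ, sInf (Cyl F a b s (n+1)) = 0) :
    a (s 0) = 0 ∧ (∀ n : ℕ, sInf (Cyl F a b s (n+1)) = a (s 0)) := by
  have ha : a (s 0) = 0 := by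
    have h1 := S.cyl_inf_ge s 0
    rw [h 0] at h1
    have h2 := S.a_nonneg (s 0)
    linarith
  exact ⟨ha, fun n => by rw [h n, ha]⟩

end Sys

lemma follows_shift {F : ℝ → ℝ} {s : ℕ → I} {z : ℝ} (h : Follows F a b s z) (j : ℕ) :
    Follows F a b (sh^[j] s) (F^[j] z) := by
  intro n
  rw [sh_iter_apply, ← Function.iterate_add_apply]
  exact h (n + j)

lemma follow_back_one {ori : I → Prop} {F : ℝ → ℝ} (S : Sys a b ori F) {s : ℕ → I} {z : ℝ}
    (hz : Follows F a b (sh s) z) : ∃ z₀, Follows F a b s z₀ := by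
  have hz1 : z ∈ Ioo (a (s 1)) (b (s 1)) := by
    have := hz 0
    simpa [sh] using this
  obtain ⟨z₀, h0, hF⟩ := S.surjIoo (s 0) (S.subIoo (s 1) hz1)
  refine ⟨z₀, fun n => ?_⟩
  rcases n with _ | n
  · simpa using h0
  · rw [Function.iterate_succ_apply, hF]
    exact hz n

lemma no_follow_shift {ori : I → Prop} {F : ℝ → ℝ} (S : Sys a b ori F) {s : ℕ → I}
    (h : ∀ z, ¬ Follows F a b s z) : ∀ (j : ℕ) (z : ℝ), ¬ Follows F a b (sh^[j] s) z := by
  intro j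
  induction j with
  | zero => exact h
  | succ j ih =>
    intro z hz
    rw [Function.iterate_succ_apply'] at hz
    obtain ⟨z₀, hz₀⟩ := follow_back_one S hz
    exact ih z₀ hz₀

namespace Sys

lemma follower_exists {G : ℝ → ℝ} (SG : Sys a b ori G) (SF : Sys a b ori F)
    {s : ℕ → I} {x : ℝ} (hx : Follows G a b s x) : ∃ z, Follows F a b s z := by
  by_contra hno
  push_neg at hno
  classical
  set w : ℕ → ℝ := fun j => Classical.choose (SF.cyl_squeeze (sh^[j] s)) with hwdef
  have hw : ∀ j : ℕ,
      Tendsto (fun n => sInf (Cyl F a b (sh^[j] s) (n+1))) atTop (𝓝 (w j)) ∧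
      Tendsto (fun n => sSup (Cyl F a b (sh^[j] s) (n+1))) atTop (𝓝 (w j)) ∧
      (∀ z, Follows F a b (sh^[j] s) z → z = w j) ∧
      (∀ n, sInf (Cyl F a b (sh^[j] s) (n+1)) ≤ w j ∧
        w j ≤ sSup (Cyl F a b (sh^[j] s) (n+1))) :=
    fun j => Classical.choose_spec (SF.cyl_squeeze (sh^[j] s))
  -- step A : interior transport
  have stepA : ∀ j : ℕ, w j ∈ Ioo (a (s j)) (b (s j)) → w (j+1) = F (w j) := by
    intro j hwj
    obtain ⟨hPl, hQl, -, -⟩ := hw j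
    obtain ⟨hPl', hQl', -, -⟩ := hw (j+1)
    have hj0 : (sh^[j] s) 0 = s j := sh_zero s j
    have hwj' : w j ∈ Ioo (a ((sh^[j] s) 0)) (b ((sh^[j] s) 0)) := by rw [hj0]; exact hwj
    obtain ⟨N1, hN1⟩ := eventually_atTop.1 (hPl.eventually (eventually_gt_nhds hwj'.1))
    obtain ⟨N2, hN2⟩ := eventually_atTop.1 (hQl.eventually (eventually_lt_nhds hwj'.2))
    have hcont : ContinuousAt F (w j) := by
      apply (SF.cont (s j)).continuousAt
      exact Ioo_mem_nhds hwj.1 hwj.2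
    have hss : sh^[j+1] s = sh (sh^[j] s) := Function.iterate_succ_apply' sh j s
    by_cases hor : ori ((sh^[j] s) 0)
    · -- monotone branch : sInf of next level is F of sInf
      have key : ∀ n ≥ max N1 N2, sInf (Cyl F a b (sh^[j+1] s) (n+1)) =
          F (sInf (Cyl F a b (sh^[j] s) (n+2))) := by
        intro n hn
        have hP1 : a ((sh^[j] s) 0) < sInf (Cyl F a b (sh^[j] s) (n+2)) :=
          hN1 (n+1) (by omega)
        have hQ1 : sSup (Cyl F a b (sh^[j] s) (n+2)) < b ((sh^[j] s) 0) :=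
          hN2 (n+1) (by omega)
        have hPQ : sInf (Cyl F a b (sh^[j] s) (n+2)) < sSup (Cyl F a b (sh^[j] s) (n+2)) :=
          SF.cyl_inf_lt_sup _ (n+1)
        have hPI : sInf (Cyl F a b (sh^[j] s) (n+2)) ∈
            Ioo (a ((sh^[j] s) 0)) (b ((sh^[j] s) 0)) := ⟨hP1, lt_trans hPQ hQ1⟩
        have hQI : sSup (Cyl F a b (sh^[j] s) (n+2)) ∈
            Ioo (a ((sh^[j] s) 0)) (b ((sh^[j] s) 0)) := ⟨lt_trans hP1 hPQ, hQ1⟩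
        set P := sInf (Cyl F a b (sh^[j] s) (n+2)) with hPdef
        set Q := sSup (Cyl F a b (sh^[j] s) (n+2)) with hQdef
        have h2 : Cyl F a b (sh^[j] s) (n+2) = Ioo P Q := SF.cyl_eq_Ioo (sh^[j] s) (n+1)
        rw [hss, ← SF.cyl_image' (sh^[j] s) n, h2,
          SF.image_Ioo_mono hor hPI hQI hPQ]
        exact csInf_Ioo (SF.mono _ hor hPI hQI hPQ)
      have h2 : Tendsto (fun n => F (sInf (Cyl F a b (sh^[j] s) (n+2)))) atTop
          (𝓝 (F (w j))) :=
        hcont.tendsto.comp (hPl.comp (tendsto_add_atTop_nat 1))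
      have h1 : Tendsto (fun n => sInf (Cyl F a b (sh^[j+1] s) (n+1))) atTop
          (𝓝 (w (j+1))) := hPl'
      have heq : (fun n => sInf (Cyl F a b (sh^[j+1] s) (n+1))) =ᶠ[atTop]
          (fun n => F (sInf (Cyl F a b (sh^[j] s) (n+2)))) :=
        eventually_atTop.2 ⟨max N1 N2, key⟩
      exact tendsto_nhds_unique (h1.congr' heq) h2
    · have key : ∀ n ≥ max N1 N2, sInf (Cyl F a b (sh^[j+1] s) (n+1)) =
          F (sSup (Cyl F a b (sh^[j] s) (n+2))) := by
        intro n hn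
        have hP1 : a ((sh^[j] s) 0) < sInf (Cyl F a b (sh^[j] s) (n+2)) :=
          hN1 (n+1) (by omega)
        have hQ1 : sSup (Cyl F a b (sh^[j] s) (n+2)) < b ((sh^[j] s) 0) :=
          hN2 (n+1) (by omega)
        have hPQ : sInf (Cyl F a b (sh^[j] s) (n+2)) < sSup (Cyl F a b (sh^[j] s) (n+2)) :=
          SF.cyl_inf_lt_sup _ (n+1)
        have hPI : sInf (Cyl F a b (sh^[j] s) (n+2)) ∈
            Ioo (a ((sh^[j] s) 0)) (b ((sh^[j] s) 0)) := ⟨hP1, lt_trans hPQ hQ1⟩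
        have hQI : sSup (Cyl F a b (sh^[j] s) (n+2)) ∈
            Ioo (a ((sh^[j] s) 0)) (b ((sh^[j] s) 0)) := ⟨lt_trans hP1 hPQ, hQ1⟩
        set P := sInf (Cyl F a b (sh^[j] s) (n+2)) with hPdef
        set Q := sSup (Cyl F a b (sh^[j] s) (n+2)) with hQdef
        have h2 : Cyl F a b (sh^[j] s) (n+2) = Ioo P Q := SF.cyl_eq_Ioo (sh^[j] s) (n+1)
        rw [hss, ← SF.cyl_image' (sh^[j] s) n, h2,
          SF.image_Ioo_anti hor hPI hQI hPQ]
        exact csInf_Ioo (SF.anti _ hor hPI hQI hPQ)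
      have h2 : Tendsto (fun n => F (sSup (Cyl F a b (sh^[j] s) (n+2)))) atTop
          (𝓝 (F (w j))) :=
        hcont.tendsto.comp (hQl.comp (tendsto_add_atTop_nat 1))
      have heq : (fun n => sInf (Cyl F a b (sh^[j+1] s) (n+1))) =ᶠ[atTop]
          (fun n => F (sSup (Cyl F a b (sh^[j] s) (n+2)))) :=
        eventually_atTop.2 ⟨max N1 N2, key⟩
      exact tendsto_nhds_unique (hPl'.congr' heq) h2
  -- iterates of w 0
  have hiter : ∀ j : ℕ, (∀ i < j, w i ∈ Ioo (a (s i)) (b (s i))) → F^[j] (w 0) = w j := by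
    intro j
    induction j with
    | zero => intro _; rfl
    | succ j ih =>
      intro h
      rw [Function.iterate_succ_apply', ih (fun i hi => h i (by omega))]
      exact (stepA j (h j (by omega))).symm
  have hexit : ∃ j, w j ∉ Ioo (a (s j)) (b (s j)) := by
    by_contra hall
    push_neg at hall
    apply hno (w 0)
    intro n
    rw [hiter n (fun i _ => hall i)]
    exact hall n
  set k := Nat.find hexit with hkdef
  have hk : w k ∉ Ioo (a (s k)) (b (s k)) := Nat.find_spec hexit
  obtain ⟨hPk, hQk, huniqk, hbdk⟩ := hw k
  have hj0 : (sh^[k] s) 0 = s k := sh_zero s k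
  have hwa : a (s k) ≤ w k := by
    apply ge_of_tendsto' hPk
    intro n
    have := SF.cyl_inf_ge (sh^[k] s) n
    rw [hj0] at this
    exact this
  have hwb : w k ≤ b (s k) := by
    apply le_of_tendsto' hQk
    intro n
    have := SF.cyl_sup_le (sh^[k] s) n
    rw [hj0] at this
    exact this
  -- level-k touching structure for F
  have hD : (∀ n : ℕ, sSup (Cyl F a b (sh^[k] s) (n+1)) = b ((sh^[k] s) 0)) ∨
      (∀ n : ℕ, sInf (Cyl F a b (sh^[k] s) (n+1)) = a ((sh^[k] s) 0)) := by
    have hcase : w k = a (s k) ∨ w k = b (s k) := by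
      by_contra hcc
      push_neg at hcc
      exact hk ⟨lt_of_le_of_ne hwa (Ne.symm hcc.1), lt_of_le_of_ne hwb hcc.2⟩
    rcases hcase with hcase | hcase
    · right
      intro n
      have h1 : a ((sh^[k] s) 0) ≤ sInf (Cyl F a b (sh^[k] s) (n+1)) := SF.cyl_inf_ge _ n
      have h2 : sInf (Cyl F a b (sh^[k] s) (n+1)) ≤ w k := (hbdk n).1
      rw [hj0] at h1 ⊢
      rw [hcase] at h2
      linarith
    · left
      intro n
      have h1 : sSup (Cyl F a b (sh^[k] s) (n+1)) ≤ b ((sh^[k] s) 0) := SF.cyl_sup_le _ n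
      have h2 : w k ≤ sSup (Cyl F a b (sh^[k] s) (n+1)) := (hbdk n).2
      rw [hj0] at h1 ⊢
      rw [hcase] at h2
      linarith
  -- transfer to G, by induction on cylinder depth across all deeper levels
  have Gmain : ∀ n : ℕ, ∀ m : ℕ,
      ((∀ n' : ℕ, sSup (Cyl F a b (sh^[m] (sh^[k] s)) (n'+1)) = b ((sh^[m] (sh^[k] s)) 0)) →
        sSup (Cyl G a b (sh^[m] (sh^[k] s)) (n+1)) = b ((sh^[m] (sh^[k] s)) 0)) ∧
      ((∀ n' : ℕ, sInf (Cyl F a b (sh^[m] (sh^[k] s)) (n'+1)) = a ((sh^[m] (sh^[k] s)) 0)) →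
        sInf (Cyl G a b (sh^[m] (sh^[k] s)) (n+1)) = a ((sh^[m] (sh^[k] s)) 0)) := by
    intro n
    induction n with
    | zero =>
      intro m
      constructor
      · intro _
        rw [cyl_one]
        exact csSup_Ioo (SG.ab_lt _)
      · intro _
        rw [cyl_one]
        exact csInf_Ioo (SG.ab_lt _)
    | succ n ihn =>
      intro m
      have hss : sh^[m+1] (sh^[k] s) = sh (sh^[m] (sh^[k] s)) :=
        Function.iterate_succ_apply' sh m (sh^[k] s)
      have ih' := ihn (m+1)
      rw [hss] at ih'
      constructor
      · intro hRT
        by_cases hor : ori ((sh^[m] (sh^[k] s)) 0)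
        · have hS1 := (SF.core_touch_right _ hRT).1 hor
          obtain ⟨hb1, hRT'⟩ := SF.core_sup1 _ hS1
          have hC : sSup (Cyl G a b (sh (sh^[m] (sh^[k] s))) (n+1)) = 1 := by
            rw [ih'.1 hRT', hb1]
          have hγ : sInf (Cyl G a b (sh (sh^[m] (sh^[k] s))) (n+1)) < 1 := by
            have := SG.cyl_inf_lt_sup (sh (sh^[m] (sh^[k] s))) n
            rw [hC] at this
            exact this
          rw [cyl_succ]
          rw [show Cyl G a b (sh (sh^[m] (sh^[k] s))) (n+1) =
            Ioo (sInf (Cyl G a b (sh (sh^[m] (sh^[k] s))) (n+1))) 1 by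
              rw [← hC]; exact SG.cyl_eq_Ioo _ n]
          exact SG.sSup_pre_mono_hi hor hγ
        · have hS1 := (SF.core_touch_right _ hRT).2 hor
          obtain ⟨hb1, hRT'⟩ := SF.core_inf0 _ hS1
          have hC : sInf (Cyl G a b (sh (sh^[m] (sh^[k] s))) (n+1)) = 0 := by
            rw [ih'.2 hRT', hb1]
          have hγ : 0 < sSup (Cyl G a b (sh (sh^[m] (sh^[k] s))) (n+1)) := by
            have := SG.cyl_inf_lt_sup (sh (sh^[m] (sh^[k] s))) n
            rw [hC] at this
            exact this
          rw [cyl_succ]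
          rw [show Cyl G a b (sh (sh^[m] (sh^[k] s))) (n+1) =
            Ioo 0 (sSup (Cyl G a b (sh (sh^[m] (sh^[k] s))) (n+1))) by
              rw [← hC]; exact SG.cyl_eq_Ioo _ n]
          exact SG.sSup_pre_anti_lo hor hγ
      · intro hLT
        by_cases hor : ori ((sh^[m] (sh^[k] s)) 0)
        · have hS1 := (SF.core_touch_left _ hLT).1 hor
          obtain ⟨hb1, hLT'⟩ := SF.core_inf0 _ hS1
          have hC : sInf (Cyl G a b (sh (sh^[m] (sh^[k] s))) (n+1)) = 0 := by
            rw [ih'.2 hLT', hb1]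
          have hγ : 0 < sSup (Cyl G a b (sh (sh^[m] (sh^[k] s))) (n+1)) := by
            have := SG.cyl_inf_lt_sup (sh (sh^[m] (sh^[k] s))) n
            rw [hC] at this
            exact this
          rw [cyl_succ]
          rw [show Cyl G a b (sh (sh^[m] (sh^[k] s))) (n+1) =
            Ioo 0 (sSup (Cyl G a b (sh (sh^[m] (sh^[k] s))) (n+1))) by
              rw [← hC]; exact SG.cyl_eq_Ioo _ n]
          exact SG.sInf_pre_mono_lo hor hγ
        · have hS1 := (SF.core_touch_left _ hLT).2 hor
          obtain ⟨hb1, hLT'⟩ := SF.core_sup1 _ hS1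
          have hC : sSup (Cyl G a b (sh (sh^[m] (sh^[k] s))) (n+1)) = 1 := by
            rw [ih'.1 hLT', hb1]
          have hγ : sInf (Cyl G a b (sh (sh^[m] (sh^[k] s))) (n+1)) < 1 := by
            have := SG.cyl_inf_lt_sup (sh (sh^[m] (sh^[k] s))) n
            rw [hC] at this
            exact this
          rw [cyl_succ]
          rw [show Cyl G a b (sh (sh^[m] (sh^[k] s))) (n+1) =
            Ioo (sInf (Cyl G a b (sh (sh^[m] (sh^[k] s))) (n+1))) 1 by
              rw [← hC]; exact SG.cyl_eq_Ioo _ n]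
          exact SG.sInf_pre_anti_hi hor hγ
  -- final contradiction
  obtain ⟨wg, hPg, hQg, hung, hbdg⟩ := SG.cyl_squeeze (sh^[k] s)
  have hxk : Follows G a b (sh^[k] s) (G^[k] x) := follows_shift hx k
  have hwgx : G^[k] x = wg := hung _ hxk
  have hxkI : G^[k] x ∈ Ioo (a ((sh^[k] s) 0)) (b ((sh^[k] s) 0)) := by
    have := hxk 0
    simpa using this
  rcases hD with hRT | hLT
  · have hGsup : ∀ n : ℕ, sSup (Cyl G a b (sh^[k] s) (n+1)) = b ((sh^[k] s) 0) := by
      intro n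
      have := (Gmain n 0).1
      simp only [Function.iterate_zero_apply] at this
      exact this hRT
    have : Tendsto (fun _ : ℕ => b ((sh^[k] s) 0)) atTop (𝓝 wg) := by
      apply hQg.congr
      intro n
      exact hGsup n
    have hwgb : wg = b ((sh^[k] s) 0) := tendsto_nhds_unique this tendsto_const_nhds
    rw [hwgx, hwgb] at hxkI
    exact absurd hxkI.2 (lt_irrefl _)
  · have hGinf : ∀ n : ℕ, sInf (Cyl G a b (sh^[k] s) (n+1)) = a ((sh^[k] s) 0) := by
      intro n
      have := (Gmain n 0).2
      simp only [Function.iterate_zero_apply] at this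
      exact this hLT
    have : Tendsto (fun _ : ℕ => a ((sh^[k] s) 0)) atTop (𝓝 wg) := by
      apply hPg.congr
      intro n
      exact hGinf n
    have hwga : wg = a ((sh^[k] s) 0) := tendsto_nhds_unique this tendsto_const_nhds
    rw [hwgx, hwga] at hxkI
    exact absurd hxkI.1 (lt_irrefl _)

end Sys

/-- `z` has (under `F`) the same symbolic itinerary as `x` (under `G`),
including agreement at Λ-landing points. -/
def Sim (G F : ℝ → ℝ) (a b : I → ℝ) (x z : ℝ) : Prop :=
  ∀ n : ℕ, (∀ i, G^[n] x ∈ Ioo (a i) (b i) → F^[n] z ∈ Ioo (a i) (b i)) ∧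
    (G^[n] x ∈ Lam a b → F^[n] z = G^[n] x)

namespace Sys

lemma zero_not_Ioo (S : Sys a b ori F) (i : I) : (0:ℝ) ∉ Ioo (a i) (b i) := by
  intro h
  exact absurd (S.subIoo i h).1 (lt_irrefl _)

lemma sim_unique {G : ℝ → ℝ} (SG : Sys a b ori G) (SF : Sys a b ori F)
    {x z z' : ℝ} (hx : x ∈ Icc (0:ℝ) 1) (h1 : Sim G F a b x z) (h2 : Sim G F a b x z') :
    z = z' := by
  classical
  by_cases hinf : ∀ n : ℕ, ∃ i, G^[n] x ∈ Ioo (a i) (b i)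
  · set s : ℕ → I := fun n => Classical.choose (hinf n) with hsdef
    have hs : ∀ n, G^[n] x ∈ Ioo (a (s n)) (b (s n)) := fun n => Classical.choose_spec (hinf n)
    have hz : Follows F a b s z := fun n => (h1 n).1 (s n) (hs n)
    have hz' : Follows F a b s z' := fun n => (h2 n).1 (s n) (hs n)
    exact SF.follower_unique hz hz'
  · push_neg at hinf
    have hlam : ∃ n : ℕ, G^[n] x ∈ Lam a b := by
      obtain ⟨n, hn⟩ := hinf
      refine ⟨n, ?_⟩
      rcases SG.mem_cases (SG.iter_mem hx n) with h | ⟨i, hi⟩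
      · exact h
      · exact absurd hi (hn i)
    set m := Nat.find hlam with hmdef
    have hm : G^[m] x ∈ Lam a b := Nat.find_spec hlam
    have hmmin : ∀ j < m, ∃ i, G^[j] x ∈ Ioo (a i) (b i) := by
      intro j hj
      rcases SG.mem_cases (SG.iter_mem hx j) with h | h
      · exact absurd h (Nat.find_min hlam hj)
      · exact h
    have hFm : F^[m] z = F^[m] z' := by
      rw [(h1 m).2 hm, (h2 m).2 hm]
    have key : ∀ d, d ≤ m → F^[m-d] z = F^[m-d] z' := by
      intro d
      induction d with
      | zero => intro _; simpa using hFm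
      | succ d ih =>
        intro hd
        have hj : m - (d+1) < m := by omega
        obtain ⟨i, hi⟩ := hmmin (m - (d+1)) hj
        have hz1 : F^[m-(d+1)] z ∈ Ioo (a i) (b i) := (h1 _).1 i hi
        have hz2 : F^[m-(d+1)] z' ∈ Ioo (a i) (b i) := (h2 _).1 i hi
        have hinj : Set.InjOn F (Ioo (a i) (b i)) := by
          by_cases hor : ori i
          · exact (SF.mono i hor).injOn
          · exact (SF.anti i hor).injOn
        apply hinj hz1 hz2
        have heqn : (m-(d+1))+1 = m - d := by omega
        have heq : F (F^[m-(d+1)] z) = F^[m-d] z := by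
          rw [← heqn, Function.iterate_succ_apply']
        have heq' : F (F^[m-(d+1)] z') = F^[m-d] z' := by
          rw [← heqn, Function.iterate_succ_apply']
        rw [heq, heq', ih (by omega)]
    have := key m (le_refl m)
    simpa using this

lemma sim_shift {G : ℝ → ℝ} {x z : ℝ} (h : Sim G F a b x z) :
    Sim G F a b (G x) (F z) := by
  intro n
  constructor
  · intro i hi
    rw [← Function.iterate_succ_apply] at hi ⊢
    exact (h (n+1)).1 i hi
  · intro hl
    rw [← Function.iterate_succ_apply] at hl ⊢
    exact (h (n+1)).2 hl

lemma sim_symm {G : ℝ → ℝ} (SG : Sys a b ori G) (SF : Sys a b ori F)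
    {x z : ℝ} (hx : x ∈ Icc (0:ℝ) 1) (h : Sim G F a b x z) : Sim F G a b z x := by
  intro n
  constructor
  · intro i hi
    rcases SG.mem_cases (SG.iter_mem hx n) with hc | ⟨j, hj⟩
    · exfalso
      have := (h n).2 hc
      rw [this] at hi
      exact SG.lam_not_Ioo hc i hi
    · have := (h n).1 j hj
      have hij : j = i := SF.Ioo_unique this hi
      rw [← hij]
      exact hj
  · intro hl
    rcases SG.mem_cases (SG.iter_mem hx n) with hc | ⟨j, hj⟩
    · exact ((h n).2 hc).symm
    · exfalso
      exact SF.lam_not_Ioo hl j ((h n).1 j hj)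

lemma sim_exists {G : ℝ → ℝ} (SG : Sys a b ori G) (SF : Sys a b ori F)
    {x : ℝ} (hx : x ∈ Icc (0:ℝ) 1) : ∃ z ∈ Icc (0:ℝ) 1, Sim G F a b x z := by
  classical
  by_cases hinf : ∀ n : ℕ, ∃ i, G^[n] x ∈ Ioo (a i) (b i)
  · set s : ℕ → I := fun n => Classical.choose (hinf n) with hsdef
    have hs : ∀ n, G^[n] x ∈ Ioo (a (s n)) (b (s n)) := fun n => Classical.choose_spec (hinf n)
    have hfol : Follows G a b s x := hs
    obtain ⟨z, hz⟩ := Sys.follower_exists SG SF hfol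
    refine ⟨z, SF.sub (s 0) (by simpa using hz 0), ?_⟩
    intro n
    constructor
    · intro i hi
      have : i = s n := SG.Ioo_unique hi (hs n)
      rw [this]
      exact hz n
    · intro hl
      exact absurd (hs n) (SG.lam_not_Ioo hl (s n))
  · push_neg at hinf
    have hlam : ∃ n : ℕ, G^[n] x ∈ Lam a b := by
      obtain ⟨n, hn⟩ := hinf
      refine ⟨n, ?_⟩
      rcases SG.mem_cases (SG.iter_mem hx n) with h | ⟨i, hi⟩
      · exact h
      · exact absurd hi (hn i)
    set m := Nat.find hlam with hmdef
    have hm : G^[m] x ∈ Lam a b := Nat.find_spec hlam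
    have hmmin : ∀ j < m, ∃ i, G^[j] x ∈ Ioo (a i) (b i) := by
      intro j hj
      rcases SG.mem_cases (SG.iter_mem hx j) with h | h
      · exact absurd h (Nat.find_min hlam hj)
      · exact h
    rcases Nat.eq_zero_or_pos m with hm0 | hmpos
    · -- x itself lands in Λ
      rw [hm0] at hm
      simp only [Function.iterate_zero_apply] at hm
      refine ⟨x, hx, ?_⟩
      intro n
      rcases Nat.eq_zero_or_pos n with hn0 | hnpos
      · subst hn0
        constructor
        · intro i hi
          exact absurd hi (SG.lam_not_Ioo hm i)
        · intro _
          rfl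
      · have hGn : G^[n] x = 0 := SG.iter_lam hm n hnpos
        have hFn : F^[n] x = 0 := SF.iter_lam hm n hnpos
        constructor
        · intro i hi
          rw [hGn] at hi
          exact absurd hi (SG.zero_not_Ioo i)
        · intro _
          rw [hGn, hFn]
    · -- finite positive landing time
      set s : ℕ → I := fun n => if h : ∃ i, G^[n] x ∈ Ioo (a i) (b i)
        then Classical.choose h else Classical.choose (hmmin 0 hmpos) with hsdef
      have hs : ∀ j < m, G^[j] x ∈ Ioo (a (s j)) (b (s j)) := by
        intro j hj
        have hex := hmmin j hj
        simp only [hsdef, dif_pos hex]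
        exact Classical.choose_spec hex
      have hback : ∀ d, d ≤ m → ∃ z, (∀ jn < d,
          F^[jn] z ∈ Ioo (a (s (m - d + jn))) (b (s (m - d + jn)))) ∧
          F^[d] z = G^[m] x := by
        intro d
        induction d with
        | zero => intro _; exact ⟨G^[m] x, fun jn h => absurd h (by omega), rfl⟩
        | succ d ih =>
          intro hd
          obtain ⟨z, hz1, hz2⟩ := ih (by omega)
          have hz01 : z ∈ Ioo (0:ℝ) 1 := by
            rcases Nat.eq_zero_or_pos d with hd0 | hdpos
            · subst hd0
              simp only [Function.iterate_zero_apply] at hz2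
              subst hz2
              have heqn : (m-1)+1 = m := by omega
              have h1 : G^[m] x = G (G^[m-1] x) := by
                conv_lhs => rw [← heqn]
                rw [Function.iterate_succ_apply']
              rw [h1]
              exact SG.F_Ioo_mem (hs (m-1) (by omega))
            · have := hz1 0 hdpos
              simp only [Function.iterate_zero_apply] at this
              exact SF.subIoo _ this
          obtain ⟨z', hz'I, hz'F⟩ := SF.surjIoo (s (m - (d+1))) hz01
          refine ⟨z', ?_, ?_⟩
          · intro jn hjn
            rcases Nat.eq_zero_or_pos jn with hj0 | hjpos
            · subst hj0
              simpa using hz'I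
            · have heqn : (jn-1)+1 = jn := by omega
              have h1 : F^[jn] z' = F^[jn - 1] (F z') := by
                conv_lhs => rw [← heqn]
                rw [Function.iterate_succ_apply]
              rw [h1, hz'F]
              have h2 := hz1 (jn - 1) (by omega)
              have h3 : m - (d+1) + jn = m - d + (jn - 1) := by omega
              rw [h3]
              exact h2
          · have h1 : F^[d+1] z' = F^[d] (F z') := Function.iterate_succ_apply F d z'
            rw [h1, hz'F, hz2]
      obtain ⟨z, hz1, hz2⟩ := hback m (le_refl m)
      have hzfol : ∀ jn < m, F^[jn] z ∈ Ioo (a (s jn)) (b (s jn)) := by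
        intro jn hjn
        have := hz1 jn hjn
        have h3 : m - m + jn = jn := by omega
        rw [h3] at this
        exact this
      refine ⟨z, ?_, ?_⟩
      · have := hzfol 0 hmpos
        simp only [Function.iterate_zero_apply] at this
        exact SF.sub _ this
      · intro n
        rcases lt_trichotomy n m with hnm | hnm | hnm
        · constructor
          · intro i hi
            have : i = s n := SG.Ioo_unique hi (hs n hnm)
            rw [this]
            exact hzfol n hnm
          · intro hl
            exact absurd (hs n hnm) (SG.lam_not_Ioo hl (s n))
        · subst hnm
          constructor
          · intro i hi
            exact absurd hi (SG.lam_not_Ioo hm i)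
          · intro _
            exact hz2
        · have hGn : G^[n] x = 0 := by
            have h1 : G^[n] x = G^[n-m] (G^[m] x) := by
              rw [← Function.iterate_add_apply]
              congr 1
              omega
            rw [h1]
            exact SG.iter_lam hm (n-m) (by omega)
          have hFn : F^[n] z = 0 := by
            have h1 : F^[n] z = F^[n-m] (F^[m] z) := by
              rw [← Function.iterate_add_apply]
              congr 1
              omega
            rw [h1, hz2]
            exact SF.iter_lam hm (n-m) (by omega)
          constructor
          · intro i hi
            rw [hGn] at hi
            exact absurd hi (SG.zero_not_Ioo i)
          · intro _
            rw [hGn, hFn]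

end Sys

namespace Sys

lemma sep_step {G : ℝ → ℝ} (SG : Sys a b ori G) (SF : Sys a b ori F) {u v zu zv : ℝ}
    (hu : u ∈ Icc (0:ℝ) 1) (hv : v ∈ Icc (0:ℝ) 1) (huv : u < v)
    (hnc : ¬ ∃ i, u ∈ Ioo (a i) (b i) ∧ v ∈ Ioo (a i) (b i))
    (hzu1 : ∀ i, u ∈ Ioo (a i) (b i) → zu ∈ Ioo (a i) (b i))
    (hzu2 : u ∈ Lam a b → zu = u)
    (hzv1 : ∀ i, v ∈ Ioo (a i) (b i) → zv ∈ Ioo (a i) (b i))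
    (hzv2 : v ∈ Lam a b → zv = v) : zu < zv := by
  rcases SG.mem_cases hu with hcu | ⟨p, hp⟩ <;> rcases SG.mem_cases hv with hcv | ⟨q, hq⟩
  · rw [hzu2 hcu, hzv2 hcv]; exact huv
  · -- u ∈ Λ, v ∈ Ioo q
    have hzv := hzv1 q hq
    have hua : u ≤ a q := by
      by_contra hc
      push_neg at hc
      exact SG.lam_not_Ioo hcu q ⟨hc, lt_trans huv hq.2⟩
    rw [hzu2 hcu]
    exact lt_of_le_of_lt hua hzv.1
  · -- u ∈ Ioo p, v ∈ Λ
    have hzu := hzu1 p hp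
    have hvb : b p ≤ v := by
      by_contra hc
      push_neg at hc
      exact SG.lam_not_Ioo hcv p ⟨lt_trans hp.1 huv, hc⟩
    rw [hzv2 hcv]
    exact lt_of_lt_of_le hzu.2 hvb
  · -- different intervals
    have hpq : p ≠ q := by
      rintro rfl
      exact hnc ⟨p, hp, hq⟩
    have hsep : b p ≤ a q := by
      rcases lt_trichotomy (a p) (a q) with h | h | h
      · exact SG.order_sep hpq h
      · exact absurd h (SG.a_ne hpq)
      · have := SG.order_sep (Ne.symm hpq) h
        exfalso
        have h1 := hq.2
        have h2 := hp.1
        linarith [hq.2, hp.1, huv]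
    have hzu := hzu1 p hp
    have hzv := hzv1 q hq
    calc zu < b p := hzu.2
    _ ≤ a q := hsep
    _ < zv := hzv.1

lemma sim_mono {G : ℝ → ℝ} (SG : Sys a b ori G) (SF : Sys a b ori F)
    {x y zx zy : ℝ} (hx : x ∈ Icc (0:ℝ) 1) (hy : y ∈ Icc (0:ℝ) 1) (hxy : x < y)
    (hsx : Sim G F a b x zx) (hsy : Sim G F a b y zy) : zx < zy := by
  classical
  have hsep : ∃ n : ℕ, ¬ ∃ i, G^[n] x ∈ Ioo (a i) (b i) ∧ G^[n] y ∈ Ioo (a i) (b i) := by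
    by_contra hc
    push_neg at hc
    set s : ℕ → I := fun n => Classical.choose (hc n) with hsdef
    have hsx' : Follows G a b s x := fun n => (Classical.choose_spec (hc n)).1
    have hsy' : Follows G a b s y := fun n => (Classical.choose_spec (hc n)).2
    exact absurd (SG.follower_unique hsx' hsy') (ne_of_lt hxy)
  set n := Nat.find hsep with hndef
  have hn : ¬ ∃ i, G^[n] x ∈ Ioo (a i) (b i) ∧ G^[n] y ∈ Ioo (a i) (b i) := Nat.find_spec hsep
  have hnmin : ∀ j < n, ∃ i, G^[j] x ∈ Ioo (a i) (b i) ∧ G^[j] y ∈ Ioo (a i) (b i) := by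
    intro j hj
    have h2 := Nat.find_min hsep hj
    push_neg at h2
    exact h2
  -- base case at the separation level, both orders
  have base : (G^[n] x < G^[n] y → F^[n] zx < F^[n] zy) ∧
      (G^[n] y < G^[n] x → F^[n] zy < F^[n] zx) := by
    constructor
    · intro h
      exact SG.sep_step SF (SG.iter_mem hx n) (SG.iter_mem hy n) h hn
        (hsx n).1 (hsx n).2 (hsy n).1 (hsy n).2
    · intro h
      apply SG.sep_step SF (SG.iter_mem hy n) (SG.iter_mem hx n) h
      · intro ⟨i, h1, h2⟩
        exact hn ⟨i, h2, h1⟩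
      · exact (hsy n).1
      · exact (hsy n).2
      · exact (hsx n).1
      · exact (hsx n).2
  -- downward propagation
  have key : ∀ d, d ≤ n → (G^[n-d] x < G^[n-d] y → F^[n-d] zx < F^[n-d] zy) ∧
      (G^[n-d] y < G^[n-d] x → F^[n-d] zy < F^[n-d] zx) := by
    intro d
    induction d with
    | zero => intro _; simpa using base
    | succ d ih =>
      intro hd
      have ih' := ih (by omega)
      set j := n - (d+1) with hjdef
      have hjn : j < n := by omega
      obtain ⟨i, hxi, hyi⟩ := hnmin j hjn
      have hzxi : F^[j] zx ∈ Ioo (a i) (b i) := (hsx j).1 i hxi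
      have hzyi : F^[j] zy ∈ Ioo (a i) (b i) := (hsy j).1 i hyi
      have heqn : j + 1 = n - d := by omega
      have hGx : G^[n-d] x = G (G^[j] x) := by
        rw [← heqn, Function.iterate_succ_apply']
      have hGy : G^[n-d] y = G (G^[j] y) := by
        rw [← heqn, Function.iterate_succ_apply']
      have hFx : F^[n-d] zx = F (F^[j] zx) := by
        rw [← heqn, Function.iterate_succ_apply']
      have hFy : F^[n-d] zy = F (F^[j] zy) := by
        rw [← heqn, Function.iterate_succ_apply']
      rw [hGx, hGy, hFx, hFy] at ih'
      by_cases hor : ori i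
      · have hGm := (SG.mono i hor).lt_iff_lt hxi hyi
        have hGm' := (SG.mono i hor).lt_iff_lt hyi hxi
        have hFm := (SF.mono i hor).lt_iff_lt hzxi hzyi
        have hFm' := (SF.mono i hor).lt_iff_lt hzyi hzxi
        constructor
        · intro h
          exact hFm.1 (ih'.1 (hGm.2 h))
        · intro h
          exact hFm'.1 (ih'.2 (hGm'.2 h))
      · have hGm := (SG.anti i hor).lt_iff_gt hxi hyi
        have hGm' := (SG.anti i hor).lt_iff_gt hyi hxi
        have hFm := (SF.anti i hor).lt_iff_gt hzxi hzyi
        have hFm' := (SF.anti i hor).lt_iff_gt hzyi hzxi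
        constructor
        · intro h
          exact hFm'.1 (ih'.2 (hGm'.2 h))
        · intro h
          exact hFm.1 (ih'.1 (hGm.2 h))
  have h2 := (key n (le_refl n)).1
  simp only [Nat.sub_self, Function.iterate_zero_apply] at h2
  exact h2 hxy

end Sys

namespace Sys

lemma one_lam (S : Sys a b ori F) : (1:ℝ) ∈ Lam a b := by
  refine ⟨⟨zero_le_one, le_refl _⟩, ?_⟩
  intro h
  rcases mem_iUnion.1 h with ⟨i, hi⟩
  exact absurd (S.subIoo i hi).2 (lt_irrefl 1)

lemma sim_lam {G : ℝ → ℝ} (SG : Sys a b ori G) (SF : Sys a b ori F)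
    {x : ℝ} (hx : x ∈ Lam a b) : Sim G F a b x x := by
  intro n
  rcases Nat.eq_zero_or_pos n with hn0 | hnpos
  · subst hn0
    exact ⟨fun i hi => absurd hi (SG.lam_not_Ioo hx i), fun _ => rfl⟩
  · have hGn : G^[n] x = 0 := SG.iter_lam hx n hnpos
    have hFn : F^[n] x = 0 := SF.iter_lam hx n hnpos
    constructor
    · intro i hi
      rw [hGn] at hi
      exact absurd hi (SG.zero_not_Ioo i)
    · intro _
      rw [hGn, hFn]

/-- the conjugating map -/
noncomputable def hmap {G : ℝ → ℝ} (SG : Sys a b ori G) (SF : Sys a b ori F) : ℝ → ℝ :=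
  fun x => if hx : x ∈ Icc (0:ℝ) 1 then Classical.choose (Sys.sim_exists SG SF hx) else x

lemma hmap_mem {G : ℝ → ℝ} (SG : Sys a b ori G) (SF : Sys a b ori F) {x : ℝ}
    (hx : x ∈ Icc (0:ℝ) 1) : Sys.hmap SG SF x ∈ Icc (0:ℝ) 1 := by
  rw [Sys.hmap, dif_pos hx]
  exact (Classical.choose_spec (Sys.sim_exists SG SF hx)).1

lemma hmap_sim {G : ℝ → ℝ} (SG : Sys a b ori G) (SF : Sys a b ori F) {x : ℝ}
    (hx : x ∈ Icc (0:ℝ) 1) : Sim G F a b x (Sys.hmap SG SF x) := by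
  rw [Sys.hmap, dif_pos hx]
  exact (Classical.choose_spec (Sys.sim_exists SG SF hx)).2

lemma hmap_eq {G : ℝ → ℝ} (SG : Sys a b ori G) (SF : Sys a b ori F) {x z : ℝ}
    (hx : x ∈ Icc (0:ℝ) 1) (hz : Sim G F a b x z) : Sys.hmap SG SF x = z :=
  Sys.sim_unique SG SF hx (Sys.hmap_sim SG SF hx) hz

lemma hmap_zero {G : ℝ → ℝ} (SG : Sys a b ori G) (SF : Sys a b ori F) :
    Sys.hmap SG SF 0 = 0 :=
  Sys.hmap_eq SG SF (by norm_num) (Sys.sim_lam SG SF SG.zero_lam)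

lemma hmap_one {G : ℝ → ℝ} (SG : Sys a b ori G) (SF : Sys a b ori F) :
    Sys.hmap SG SF 1 = 1 :=
  Sys.hmap_eq SG SF (by norm_num) (Sys.sim_lam SG SF SG.one_lam)

lemma hmap_leftInv {G : ℝ → ℝ} (SG : Sys a b ori G) (SF : Sys a b ori F) {x : ℝ}
    (hx : x ∈ Icc (0:ℝ) 1) : Sys.hmap SF SG (Sys.hmap SG SF x) = x := by
  apply Sys.hmap_eq SF SG (Sys.hmap_mem SG SF hx)
  exact Sys.sim_symm SG SF hx (Sys.hmap_sim SG SF hx)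

lemma hmap_conj {G : ℝ → ℝ} (SG : Sys a b ori G) (SF : Sys a b ori F) {x : ℝ}
    (hx : x ∈ Icc (0:ℝ) 1) : Sys.hmap SG SF (G x) = F (Sys.hmap SG SF x) := by
  apply Sys.hmap_eq SG SF (SG.maps hx)
  exact Sys.sim_shift (Sys.hmap_sim SG SF hx)

lemma hmap_strictMono {G : ℝ → ℝ} (SG : Sys a b ori G) (SF : Sys a b ori F) :
    StrictMonoOn (Sys.hmap SG SF) (Icc (0:ℝ) 1) := by
  intro x hx y hy hxy
  exact Sys.sim_mono SG SF hx hy hxy (Sys.hmap_sim SG SF hx) (Sys.hmap_sim SG SF hy)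

end Sys

lemma continuousOn_of_strictMonoOn_surjOn {h : ℝ → ℝ}
    (hmono : StrictMonoOn h (Icc 0 1)) (hsurj : SurjOn h (Icc (0:ℝ) 1) (Icc (0:ℝ) 1))
    (h0 : h 0 = 0) (h1 : h 1 = 1) :
    ContinuousOn h (Icc (0:ℝ) 1) := by
  intro x₀ hx₀
  have hIcc : Icc (0:ℝ) x₀ ∪ Icc x₀ 1 = Icc (0:ℝ) 1 := Icc_union_Icc_eq_Icc hx₀.1 hx₀.2
  rw [← hIcc]
  apply ContinuousWithinAt.union
  · -- left part
    rcases eq_or_lt_of_le hx₀.1 with hx0 | hx0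
    · have : Icc (0:ℝ) x₀ = {x₀} := by rw [← hx0]; simp
      rw [this]
      exact continuousWithinAt_singleton
    · have hcw : ContinuousWithinAt h (Iic x₀) x₀ := by
        apply StrictMonoOn.continuousWithinAt_left_of_exists_between hmono
        · apply mem_of_superset (Icc_mem_nhdsLE_of_mem (⟨hx0, hx₀.2⟩ : x₀ ∈ Ioc 0 1))
          exact Icc_subset_Icc (le_refl _) (le_refl _)
        · intro c hc
          have hpos : 0 < h x₀ := by
            rw [← h0]
            exact hmono (by norm_num) hx₀ hx0
          set y := max c 0 with hydef
          have hy1 : y < h x₀ := max_lt hc hpos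
          have hyI : y ∈ Icc (0:ℝ) 1 := by
            constructor
            · exact le_max_right _ _
            · have : h x₀ ≤ 1 := by
                rw [← h1]
                rcases eq_or_lt_of_le hx₀.2 with he | he
                · rw [he]
                · exact (hmono hx₀ (by norm_num) he).le
              linarith
          obtain ⟨d, hdI, hdy⟩ := hsurj hyI
          exact ⟨d, hdI, by rw [hdy]; exact ⟨le_max_left _ _, hy1⟩⟩
      exact hcw.mono Icc_subset_Iic_self
  · -- right part
    rcases eq_or_lt_of_le hx₀.2 with hx1 | hx1
    · have : Icc x₀ (1:ℝ) = {x₀} := by rw [hx1]; simp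
      rw [this]
      exact continuousWithinAt_singleton
    · have hcw : ContinuousWithinAt h (Ici x₀) x₀ := by
        apply StrictMonoOn.continuousWithinAt_right_of_exists_between hmono
        · apply mem_of_superset (Icc_mem_nhdsGE_of_mem (⟨le_refl _, hx1⟩ : x₀ ∈ Ico x₀ 1))
          exact Icc_subset_Icc hx₀.1 (le_refl _)
        · intro c hc
          have hlt1 : h x₀ < 1 := by
            rw [← h1]
            exact hmono hx₀ (by norm_num) hx1
          set y := min c 1 with hydef
          have hy1 : h x₀ < y := lt_min hc hlt1
          have hyI : y ∈ Icc (0:ℝ) 1 := by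
            constructor
            · have : 0 ≤ h x₀ := by
                rw [← h0]
                rcases eq_or_lt_of_le hx₀.1 with he | he
                · rw [← he]
                · exact (hmono (by norm_num) hx₀ he).le
              linarith
            · exact min_le_right _ _
          obtain ⟨d, hdI, hdy⟩ := hsurj hyI
          exact ⟨d, hdI, by rw [hdy]; exact ⟨hy1, min_le_left _ _⟩⟩
      exact hcw.mono Icc_subset_Ici_self

theorem main {I : Type} (f g : ℝ → ℝ) (hf : Set.MapsTo f (Set.Icc 0 1) (Set.Icc 0 1))
    (hg : Set.MapsTo g (Set.Icc 0 1) (Set.Icc 0 1))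
    (a b : I → ℝ)
    (hsub : ∀ i, Set.Ioo (a i) (b i) ⊆ Set.Icc (0 : ℝ) 1)
    (hdisj : Pairwise fun i j => Disjoint (Set.Ioo (a i) (b i)) (Set.Ioo (a j) (b j)))
    (hcont : ∀ i, ContinuousOn f (Set.Ioo (a i) (b i)))
    (hmono : ∀ i, StrictMonoOn f (Set.Ioo (a i) (b i)) ∨
      StrictAntiOn f (Set.Ioo (a i) (b i)))
    (himg : ∀ i, f '' Set.Ioo (a i) (b i) = Set.Ioo (0 : ℝ) 1)
    (hexp : ∀ i, ∀ x ∈ Set.Ioo (a i) (b i), ∀ y ∈ Set.Ioo (a i) (b i), x ≠ y →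
      |x - y| < |f x - f y|)
    (hfL : ∀ x ∈ Set.Icc (0 : ℝ) 1 \ ⋃ i, Set.Ioo (a i) (b i), f x = 0)
    (hglin : ∀ i, ∃ c d : ℝ,
      (∀ x ∈ Set.Ioo (a i) (b i), g x = c * x + d) ∧
      Filter.Tendsto f (nhdsWithin (a i) (Set.Ioo (a i) (b i))) (nhds (c * a i + d)) ∧
      Filter.Tendsto f (nhdsWithin (b i) (Set.Ioo (a i) (b i))) (nhds (c * b i + d)))
    (hgL : ∀ x ∈ Set.Icc (0 : ℝ) 1 \ ⋃ i, Set.Ioo (a i) (b i), g x = 0) :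
    ∃ h hinv : ℝ → ℝ,
      ContinuousOn h (Set.Icc 0 1) ∧ Set.BijOn h (Set.Icc 0 1) (Set.Icc 0 1) ∧
      ContinuousOn hinv (Set.Icc 0 1) ∧ Set.InvOn hinv h (Set.Icc 0 1) (Set.Icc 0 1) ∧
      ∀ x ∈ Set.Icc (0 : ℝ) 1, g x = hinv (f (h x)) := by
  classical
  set ori : I → Prop := fun i => StrictMonoOn f (Set.Ioo (a i) (b i)) with horidef
  have SF : Sys a b ori f :=
    { maps := hf, sub := hsub, disj := hdisj, cont := hcont,
      mono := fun i h => h, anti := fun i h => (hmono i).resolve_left h,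
      img := himg, expa := hexp, lam := hfL }
  have hab : ∀ i, a i < b i := SF.ab_lt
  have hboundf : ∀ i, ∀ x ∈ Ioo (a i) (b i), ∀ y ∈ Ioo (a i) (b i), f x - f y < 1 := by
    intro i x hx y hy
    have h1 : f x ∈ Ioo (0:ℝ) 1 := (himg i) ▸ mem_image_of_mem f hx
    have h2 : f y ∈ Ioo (0:ℝ) 1 := (himg i) ▸ mem_image_of_mem f hy
    linarith [h1.2, h2.1]
  have hlen : ∀ i, b i - a i < 1 := by
    intro i
    rcases hmono i with hor | hor
    · exact length_lt_one (hab i) hor (hexp i) (hboundf i)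
    · exact length_lt_one_anti (hab i) hor (hexp i) (hboundf i)
  choose c d hgl hta htb using hglin
  have hNBa : ∀ i, (nhdsWithin (a i) (Ioo (a i) (b i))).NeBot := by
    intro i
    apply mem_closure_iff_nhdsWithin_neBot.1
    rw [closure_Ioo (ne_of_lt (hab i))]
    exact ⟨le_refl _, (hab i).le⟩
  have hNBb : ∀ i, (nhdsWithin (b i) (Ioo (a i) (b i))).NeBot := by
    intro i
    apply mem_closure_iff_nhdsWithin_neBot.1
    rw [closure_Ioo (ne_of_lt (hab i))]
    exact ⟨(hab i).le, le_refl _⟩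
  have hcd_mono : ∀ i, ori i → c i * a i + d i = 0 ∧ c i * b i + d i = 1 := by
    intro i hor
    constructor
    · haveI := hNBa i
      exact tendsto_nhds_unique (hta i) (tendsto_mono_left (hab i) hor (himg i))
    · haveI := hNBb i
      exact tendsto_nhds_unique (htb i) (tendsto_mono_right (hab i) hor (himg i))
  have hcd_anti : ∀ i, ¬ ori i → c i * a i + d i = 1 ∧ c i * b i + d i = 0 := by
    intro i hor
    have hanti : StrictAntiOn f (Ioo (a i) (b i)) := (hmono i).resolve_left hor
    constructor
    · haveI := hNBa i
      exact tendsto_nhds_unique (hta i) (tendsto_anti_left (hab i) hanti (himg i))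
    · haveI := hNBb i
      exact tendsto_nhds_unique (htb i) (tendsto_anti_right (hab i) hanti (himg i))
  have hc_mono : ∀ i, ori i → 1 < c i := by
    intro i hor
    obtain ⟨h1, h2⟩ := hcd_mono i hor
    have h3 : c i * (b i - a i) = 1 := by linear_combination h2 - h1
    have h4 := hlen i
    have h5 := hab i
    nlinarith
  have hc_anti : ∀ i, ¬ ori i → c i < -1 := by
    intro i hor
    obtain ⟨h1, h2⟩ := hcd_anti i hor
    have h3 : c i * (b i - a i) = -1 := by linear_combination h2 - h1
    have h4 := hlen i
    have h5 := hab i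
    nlinarith
  have gmono : ∀ i, ori i → StrictMonoOn g (Ioo (a i) (b i)) := by
    intro i hor x hx y hy hxy
    rw [hgl i x hx, hgl i y hy]
    have := hc_mono i hor
    nlinarith
  have ganti : ∀ i, ¬ ori i → StrictAntiOn g (Ioo (a i) (b i)) := by
    intro i hor x hx y hy hxy
    rw [hgl i x hx, hgl i y hy]
    have := hc_anti i hor
    nlinarith
  have gimg : ∀ i, g '' Ioo (a i) (b i) = Ioo (0:ℝ) 1 := by
    intro i
    ext y
    constructor
    · rintro ⟨x, hx, rfl⟩
      rw [hgl i x hx]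
      by_cases hor : ori i
      · obtain ⟨h1, h2⟩ := hcd_mono i hor
        have hc := hc_mono i hor
        constructor
        · nlinarith [hx.1]
        · nlinarith [hx.2]
      · obtain ⟨h1, h2⟩ := hcd_anti i hor
        have hc := hc_anti i hor
        constructor
        · nlinarith [hx.2]
        · nlinarith [hx.1]
    · intro hy
      by_cases hor : ori i
      · obtain ⟨h1, h2⟩ := hcd_mono i hor
        have hc := hc_mono i hor
        have hcne : c i ≠ 0 := by linarith
        have hxI : (y - d i)/(c i) ∈ Ioo (a i) (b i) := by
          constructor
          · rw [lt_div_iff₀ (by linarith : (0:ℝ) < c i)]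
            nlinarith [hy.1]
          · rw [div_lt_iff₀ (by linarith : (0:ℝ) < c i)]
            nlinarith [hy.2]
        refine ⟨(y - d i)/(c i), hxI, ?_⟩
        rw [hgl i _ hxI]
        field_simp
        ring
      · obtain ⟨h1, h2⟩ := hcd_anti i hor
        have hc := hc_anti i hor
        have hcne : c i ≠ 0 := by linarith
        have hxI : (y - d i)/(c i) ∈ Ioo (a i) (b i) := by
          constructor
          · rw [lt_div_iff_of_neg (by linarith : c i < 0)]
            nlinarith [hy.2]
          · rw [div_lt_iff_of_neg (by linarith : c i < 0)]
            nlinarith [hy.1]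
        refine ⟨(y - d i)/(c i), hxI, ?_⟩
        rw [hgl i _ hxI]
        field_simp
        ring
  have gexp : ∀ i, ∀ x ∈ Ioo (a i) (b i), ∀ y ∈ Ioo (a i) (b i), x ≠ y →
      |x - y| < |g x - g y| := by
    intro i x hx y hy hne
    rw [hgl i x hx, hgl i y hy,
      show c i * x + d i - (c i * y + d i) = c i * (x - y) by ring, abs_mul]
    have h1 : 1 < |c i| := by
      by_cases hor : ori i
      · have := hc_mono i hor
        rw [abs_of_pos (by linarith)]
        linarith
      · have := hc_anti i hor
        rw [abs_of_neg (by linarith)]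
        linarith
    have h2 : 0 < |x - y| := abs_pos.2 (sub_ne_zero.2 hne)
    nlinarith
  have gcont : ∀ i, ContinuousOn g (Ioo (a i) (b i)) := by
    intro i
    have hcc : ContinuousOn (fun x => c i * x + d i) (Ioo (a i) (b i)) :=
      ((continuous_const.mul continuous_id).add continuous_const).continuousOn
    exact hcc.congr (fun x hx => hgl i x hx)
  have SG : Sys a b ori g :=
    { maps := hg, sub := hsub, disj := hdisj, cont := gcont,
      mono := gmono, anti := ganti, img := gimg, expa := gexp, lam := hgL }
  refine ⟨Sys.hmap SG SF, Sys.hmap SF SG, ?_, ?_, ?_, ?_, ?_⟩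
  case _ =>
    apply continuousOn_of_strictMonoOn_surjOn (Sys.hmap_strictMono SG SF)
    · intro y hy
      exact ⟨Sys.hmap SF SG y, Sys.hmap_mem SF SG hy, Sys.hmap_leftInv SF SG hy⟩
    · exact Sys.hmap_zero SG SF
    · exact Sys.hmap_one SG SF
  case _ =>
    refine Set.InvOn.bijOn ⟨?_, ?_⟩ (fun x hx => Sys.hmap_mem SG SF hx)
      (fun x hx => Sys.hmap_mem SF SG hx)
    · intro x hx
      exact Sys.hmap_leftInv SG SF hx
    · intro y hy
      exact Sys.hmap_leftInv SF SG hy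
  case _ =>
    apply continuousOn_of_strictMonoOn_surjOn (Sys.hmap_strictMono SF SG)
    · intro y hy
      exact ⟨Sys.hmap SG SF y, Sys.hmap_mem SG SF hy, Sys.hmap_leftInv SG SF hy⟩
    · exact Sys.hmap_zero SF SG
    · exact Sys.hmap_one SF SG
  case _ =>
    constructor
    · intro x hx
      exact Sys.hmap_leftInv SG SF hx
    · intro y hy
      exact Sys.hmap_leftInv SF SG hy
  case _ =>
    intro x hx
    calc g x = Sys.hmap SF SG (Sys.hmap SG SF (g x)) := (Sys.hmap_leftInv SG SF (hg hx)).symm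
    _ = Sys.hmap SF SG (f (Sys.hmap SG SF x)) := by rw [Sys.hmap_conj SG SF hx]

end BaldwinConj

/-- **Lemma 3.5 (Baldwin-type conjugacy).** Let `f : [0,1] → [0,1]` be continuous and strictly
monotone on countably many pairwise disjoint open intervals `(aᵢ, bᵢ)`, each mapped onto
`(0,1)`, expanding on each interval, with countable complement `Λ` on which `f = 0`.  Let `g`
be the corresponding linearised map: linear on each `(aᵢ, bᵢ)` with the same one-sided limits
as `f`, and `g = 0` on `Λ`.  Then `f` and `g` are topologically conjugate: there is a
homeomorphism `h` of `[0,1]` with `g = h⁻¹ ∘ f ∘ h` on `[0,1]`. -/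
theorem linearisation_topologically_conjugate
    (f g : ℝ → ℝ) (hf : Set.MapsTo f (Set.Icc 0 1) (Set.Icc 0 1))
    (hg : Set.MapsTo g (Set.Icc 0 1) (Set.Icc 0 1))
    (I : Type) (hI : Countable I) (a b : I → ℝ)
    (hsub : ∀ i, Set.Ioo (a i) (b i) ⊆ Set.Icc (0 : ℝ) 1)
    (hdisj : Pairwise fun i j => Disjoint (Set.Ioo (a i) (b i)) (Set.Ioo (a j) (b j)))
    -- (i) `f` is continuous and monotone on each `(aᵢ, bᵢ)` with `f((aᵢ,bᵢ)) = (0,1)`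
    (hcont : ∀ i, ContinuousOn f (Set.Ioo (a i) (b i)))
    (hmono : ∀ i, StrictMonoOn f (Set.Ioo (a i) (b i)) ∨
      StrictAntiOn f (Set.Ioo (a i) (b i)))
    (himg : ∀ i, f '' Set.Ioo (a i) (b i) = Set.Ioo (0 : ℝ) 1)
    -- (ii) expansivity: `|f x - f y| > |x - y|` for distinct `x, y` in the same interval
    (hexp : ∀ i, ∀ x ∈ Set.Ioo (a i) (b i), ∀ y ∈ Set.Ioo (a i) (b i), x ≠ y →
      |x - y| < |f x - f y|)
    -- (iii) `Λ = [0,1] \ ⋃ᵢ (aᵢ, bᵢ)` is countable and `f(Λ) = {0}`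
    (hcov : (Set.Icc (0 : ℝ) 1 \ ⋃ i, Set.Ioo (a i) (b i)).Countable)
    (hfΛ : ∀ x ∈ Set.Icc (0 : ℝ) 1 \ ⋃ i, Set.Ioo (a i) (b i), f x = 0)
    -- definition of the linearised map `g`
    (hglin : ∀ i, ∃ c d : ℝ,
      (∀ x ∈ Set.Ioo (a i) (b i), g x = c * x + d) ∧
      Filter.Tendsto f (nhdsWithin (a i) (Set.Ioo (a i) (b i))) (nhds (c * a i + d)) ∧
      Filter.Tendsto f (nhdsWithin (b i) (Set.Ioo (a i) (b i))) (nhds (c * b i + d)))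
    (hgΛ : ∀ x ∈ Set.Icc (0 : ℝ) 1 \ ⋃ i, Set.Ioo (a i) (b i), g x = 0) :
    ∃ h hinv : ℝ → ℝ,
      ContinuousOn h (Set.Icc 0 1) ∧ Set.BijOn h (Set.Icc 0 1) (Set.Icc 0 1) ∧
      ContinuousOn hinv (Set.Icc 0 1) ∧ Set.InvOn hinv h (Set.Icc 0 1) (Set.Icc 0 1) ∧
      ∀ x ∈ Set.Icc (0 : ℝ) 1, g x = hinv (f (h x)) :=
  BaldwinConj.main f g hf hg a b hsub hdisj hcont hmono himg hexp hfΛ hglin hgΛ
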